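/- arXiv:1102.0603 — 11 statements merged into one kernel-verified Lean document; each statement's English description precedes it below -/
import Mathlib

section
/- Let F ⊆ [0,1] be measurable, let 0 < p < c, let θ : ℝ → [0,1] be a position trajectory with period T > 0 and coverage time τ, and let Z be an accumulation function for θ. Then for every t, Z(t+T) − Z(t) ≥ p·T − c·τ; moreover, if Z(s) > 0 for all s ∈ [t, t+T], then Z(t+T) − Z(t) = p·T − c·τ. -/
open MeasureTheory Filter Set

/-- A position trajectory `θ : ℝ → [0,1]` with period `T > 0` and coverage time `τ ≥ 0`
for the covered-position set `F ⊆ [0,1]`. -/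
def IsTrajectory (F : Set ℝ) (θ : ℝ → ℝ) (T τ : ℝ) : Prop :=
  (∀ t : ℝ, θ t ∈ Set.Icc (0 : ℝ) 1) ∧ 0 < T ∧ 0 ≤ τ ∧
  (∀ t : ℝ, θ (t + T) = θ t) ∧
  (∀ t : ℝ, (∫ s in t..(t + T), F.indicator (fun _ => (1 : ℝ)) (θ s)) = τ)

/-- An accumulation function for the trajectory `θ`: a locally absolutely continuous
nonnegative function `Z` (written as the integral of a locally integrable derivative `g`)
such that a.e. `Z' = p - c·1_F(θ t)` when `Z > 0` and `Z' = max (p - c·1_F(θ t)) 0`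
when `Z = 0`. -/
def IsAccumulation (F : Set ℝ) (p c : ℝ) (θ : ℝ → ℝ) (Z : ℝ → ℝ) : Prop :=
  (∀ t : ℝ, 0 ≤ Z t) ∧
  ∃ g : ℝ → ℝ, MeasureTheory.LocallyIntegrable g MeasureTheory.volume ∧
    (∀ a b : ℝ, Z b - Z a = ∫ s in a..b, g s) ∧
    (∀ᵐ t : ℝ, (0 < Z t → g t = p - c * F.indicator (fun _ => (1 : ℝ)) (θ t)) ∧
      (Z t = 0 → g t = max (p - c * F.indicator (fun _ => (1 : ℝ)) (θ t)) 0))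

/-!
The rate `Z'` is a.e. at least the free rate `p - c·1_F(θ)`, with equality while `Z > 0`, and
over one period the free rate integrates to `p·T - c·τ` by the definition of `τ`.
Since `θ` is not assumed measurable, the integrability of `1_F ∘ θ` is read off the locally
integrable rate instead: as `0 < p < c`, the rate equals `p` exactly where `1_F ∘ θ = 0`.
-/

section Rate

variable {μ : Measure ℝ} {p c : ℝ} {h g : ℝ → ℝ}

lemma ae_rate_eq_or_eq_max {Z : ℝ → ℝ} (hZ : ∀ t, 0 ≤ Z t)
    (hg : ∀ᵐ t ∂μ, (0 < Z t → g t = p - c * h t) ∧ (Z t = 0 → g t = max (p - c * h t) 0)) :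
    ∀ᵐ t ∂μ, g t = p - c * h t ∨ g t = max (p - c * h t) 0 := by
  filter_upwards [hg] with t ⟨hpos, hzero⟩
  rcases (hZ t).lt_or_eq with hZt | hZt
  · exact .inl (hpos hZt)
  · exact .inr (hzero hZt.symm)

lemma ae_free_rate_le (hg : ∀ᵐ t ∂μ, g t = p - c * h t ∨ g t = max (p - c * h t) 0) :
    ∀ᵐ t ∂μ, p - c * h t ≤ g t := by
  filter_upwards [hg] with t ht
  rcases ht with ht | ht <;> rw [ht]
  exact le_max_left _ _

lemma eq_ite_of_rate_cases {x y : ℝ} (hp : 0 < p) (hpc : p < c)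
    (hx : x = 0 ∨ x = 1) (hy : y = p - c * x ∨ y = max (p - c * x) 0) :
    x = if y = p then 0 else 1 := by
  rcases hx with rfl | rfl
  · rcases hy with rfl | rfl <;> simp [hp.le]
  · have hy' : y ≠ p := by
      rcases hy with rfl | rfl
      · linarith
      · rw [max_eq_right (by linarith)]; exact hp.ne
    simp [hy']

lemma aestronglyMeasurable_of_ae_rate (hp : 0 < p) (hpc : p < c)
    (h01 : ∀ t, h t = 0 ∨ h t = 1) (hgm : AEStronglyMeasurable g μ)
    (hg : ∀ᵐ t ∂μ, g t = p - c * h t ∨ g t = max (p - c * h t) 0) :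
    AEStronglyMeasurable h μ := by
  have hφ : Measurable fun y : ℝ => if y = p then (0 : ℝ) else 1 :=
    Measurable.ite (measurableSet_singleton p) measurable_const measurable_const
  refine (hφ.comp_aemeasurable hgm.aemeasurable).aestronglyMeasurable.congr ?_
  filter_upwards [hg] with t ht
  exact (eq_ite_of_rate_cases hp hpc (h01 t) ht).symm

end Rate

lemma intervalIntegrable_of_eq_zero_or_eq_one {μ : Measure ℝ} [IsLocallyFiniteMeasure μ]
    {h : ℝ → ℝ} (h01 : ∀ t, h t = 0 ∨ h t = 1) (hm : AEStronglyMeasurable h μ) (a b : ℝ) :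
    IntervalIntegrable h μ a b :=
  (intervalIntegrable_const (c := (1 : ℝ))).mono_fun hm.restrict
    (ae_of_all _ fun t => by rcases h01 t with ht | ht <;> simp [ht])

lemma integral_const_sub_const_mul {h : ℝ → ℝ} {a b : ℝ} (hh : IntervalIntegrable h volume a b)
    (p c : ℝ) : ∫ t in a..b, (p - c * h t) = p * (b - a) - c * ∫ t in a..b, h t := by
  rw [intervalIntegral.integral_sub intervalIntegrable_const (hh.const_mul c),
    intervalIntegral.integral_const_mul, intervalIntegral.integral_const, smul_eq_mul, mul_comm]

theorem per_cycle_change_general (F : Set ℝ) (p c : ℝ)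
    (hp : 0 < p) (hpc : p < c) (θ : ℝ → ℝ) (T τ : ℝ)
    (htraj : IsTrajectory F θ T τ) (Z : ℝ → ℝ)
    (hZ : IsAccumulation F p c θ Z) :
    (∀ t : ℝ, p * T - c * τ ≤ Z (t + T) - Z t) ∧
    (∀ t : ℝ, (∀ s ∈ Set.Icc t (t + T), 0 < Z s) →
      Z (t + T) - Z t = p * T - c * τ) := by
  obtain ⟨-, hT, -, -, hcov⟩ := htraj
  obtain ⟨hZ0, g, hgloc, hZg, hrate⟩ := hZ
  set h : ℝ → ℝ := fun s => F.indicator (fun _ => (1 : ℝ)) (θ s)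
  have h01 : ∀ t, h t = 0 ∨ h t = 1 := fun t => indicator_eq_zero_or_self F _ (θ t)
  have hcases := ae_rate_eq_or_eq_max hZ0 hrate
  have hint := intervalIntegrable_of_eq_zero_or_eq_one h01
    (aestronglyMeasurable_of_ae_rate hp hpc h01 hgloc.aestronglyMeasurable hcases)
  have hfree : ∀ t, ∫ s in t..t + T, (p - c * h s) = p * T - c * τ := fun t => by
    rw [integral_const_sub_const_mul (hint t (t + T)), hcov t, add_sub_cancel_left]
  refine ⟨fun t => ?_, fun t hpos => ?_⟩
  · have hgint := hgloc.integrableOn_isCompact (isCompact_uIcc (a := t) (b := t + T))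
    rw [hZg, ← hfree t]
    exact intervalIntegral.integral_mono_ae (by linarith)
      (intervalIntegrable_const.sub ((hint _ _).const_mul c)) hgint.intervalIntegrable
      (ae_free_rate_le hcases)
  · rw [hZg, ← hfree t]
    refine intervalIntegral.integral_congr_ae ?_
    filter_upwards [hrate] with s hs hsT
    rw [uIoc_of_le (by linarith)] at hsT
    exact hs.1 (hpos s (Ioc_subset_Icc_self hsT))

/-- Per-cycle change of the accumulation function: over any interval of length one period,
the field changes by at least `p·T − c·τ`, with equality when the field stays positive. -/
theorem per_cycle_change (F : Set ℝ) (hF : MeasurableSet F) (p c : ℝ)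
    (hp : 0 < p) (hpc : p < c) (θ : ℝ → ℝ) (T τ : ℝ)
    (htraj : IsTrajectory F θ T τ) (Z : ℝ → ℝ)
    (hZ : IsAccumulation F p c θ Z) :
    (∀ t : ℝ, p * T - c * τ ≤ Z (t + T) - Z t) ∧
    (∀ t : ℝ, (∀ s ∈ Set.Icc t (t + T), 0 < Z s) →
      Z (t + T) - Z t = p * T - c * τ) :=
  per_cycle_change_general F p c hp hpc θ T τ htraj Z hZ
end

section
/- (Sufficiency in the Stability Condition Lemma.) Let F ⊆ [0,1] be measurable, let 0 < p < c, let θ : ℝ → [0,1] be a position trajectory with period T > 0 and coverage time τ, and suppose c·τ > p·T. Then for every accumulation function Z for θ there exists a finite time t̄ such that Z(t) ≤ c·T for all t ≥ t̄; in particular limsup_{t→∞} Z(t) ≤ c·T. -/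
open MeasureTheory Filter Set

/-- Sufficiency in the stability condition lemma: if `c·τ > p·T` then every accumulation
function is eventually bounded by `c·T`. -/
theorem stability_sufficiency (F : Set ℝ) (hF : MeasurableSet F) (p c : ℝ)
    (hp : 0 < p) (hpc : p < c) (θ : ℝ → ℝ) (T τ : ℝ)
    (htraj : IsTrajectory F θ T τ) (hstab : p * T < c * τ)
    (Z : ℝ → ℝ) (hZ : IsAccumulation F p c θ Z) :
    ∃ tbar : ℝ, (∀ t : ℝ, tbar ≤ t → Z t ≤ c * T) ∧
      Filter.limsup Z Filter.atTop ≤ c * T := by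
  obtain ⟨hθmem, hT, hτ0, hper, hint⟩ := htraj
  obtain ⟨hZ0, g, hgloc, hgint, hgae⟩ := hZ
  set h : ℝ → ℝ := fun s => F.indicator (fun _ => (1 : ℝ)) (θ s) with hh
  set f : ℝ → ℝ := fun s => p - c * h s with hf
  have hc : 0 < c := hp.trans hpc
  have hτpos : 0 < τ := by nlinarith
  have hδ : 0 < c * τ - p * T := by linarith
  -- h is nonnegative
  have hhnn : ∀ s, 0 ≤ h s := fun s =>
    Set.indicator_nonneg (fun _ _ => zero_le_one) _
  -- interval integrability of h on each period
  have hII1 : ∀ t : ℝ, IntervalIntegrable h volume t (t + T) := by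
    intro t
    by_contra hcon
    have h0 := hint t
    rw [intervalIntegral.integral_undef hcon] at h0
    linarith
  have hII1' : ∀ t : ℝ, IntervalIntegrable h volume t (t + T) := hII1
  have hIIn : ∀ (t : ℝ) (n : ℕ), IntervalIntegrable h volume t (t + n * T) := by
    intro t n
    induction n with
    | zero => simp
    | succ k ih =>
      have : (t + (k + 1 : ℕ) * T) = (t + k * T) + T := by push_cast; ring
      rw [this]
      exact ih.trans (hII1 (t + k * T))
  have hII : ∀ a b : ℝ, a ≤ b → IntervalIntegrable h volume a b := by
    intro a b hab
    obtain ⟨n, hn⟩ := exists_nat_gt ((b - a) / T)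
    have hbn : b ≤ a + n * T := by
      have := (div_lt_iff₀ hT).mp hn
      linarith
    refine (hIIn a n).mono_set ?_
    rw [Set.uIcc_of_le hab, Set.uIcc_of_le (by nlinarith : a ≤ a + n * T)]
    exact Set.Icc_subset_Icc_right hbn
  -- integral of h over n periods
  have hper_int : ∀ (t : ℝ) (n : ℕ), (∫ s in t..(t + n * T), h s) = n * τ := by
    intro t n
    induction n with
    | zero => simp
    | succ k ih =>
      have he : (t + (k + 1 : ℕ) * T) = (t + k * T) + T := by push_cast; ring
      rw [he, ← intervalIntegral.integral_add_adjacent_intervals (hIIn t k) (hII1 (t + k * T)),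
        ih, hint (t + k * T)]
      push_cast; ring
  -- lower bound on integral of h
  have hlow : ∀ u t : ℝ, u ≤ t → (⌊(t - u) / T⌋₊ : ℝ) * τ ≤ ∫ s in u..t, h s := by
    intro u t hut
    set k := ⌊(t - u) / T⌋₊ with hk
    have hknn : (0:ℝ) ≤ (t - u) / T := div_nonneg (by linarith) hT.le
    have hkle : (k : ℝ) ≤ (t - u) / T := Nat.floor_le hknn
    have hukt : u + k * T ≤ t := by
      have := (le_div_iff₀ hT).mp hkle
      linarith
    rw [← intervalIntegral.integral_add_adjacent_intervals (hIIn u k) (hII _ _ hukt)]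
    have h2 : 0 ≤ ∫ s in (u + k * T)..t, h s :=
      intervalIntegral.integral_nonneg hukt (fun x _ => hhnn x)
    rw [hper_int u k]
    linarith
  -- integral of f in terms of integral of h
  have hfII : ∀ a b : ℝ, a ≤ b → IntervalIntegrable f volume a b := by
    intro a b hab
    exact (intervalIntegrable_const).sub ((hII a b hab).const_mul c)
  have hfint : ∀ u t : ℝ, u ≤ t →
      (∫ s in u..t, f s) = p * (t - u) - c * ∫ s in u..t, h s := by
    intro u t hut
    rw [hf]
    rw [intervalIntegral.integral_sub intervalIntegrable_const ((hII u t hut).const_mul c),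
      intervalIntegral.integral_const, intervalIntegral.integral_const_mul]
    simp [smul_eq_mul, mul_comm]
  -- upper bound on integral of f
  have hfle : ∀ u t : ℝ, u ≤ t →
      (∫ s in u..t, f s) ≤ p * T - (⌊(t - u) / T⌋₊ : ℝ) * (c * τ - p * T) := by
    intro u t hut
    set k := ⌊(t - u) / T⌋₊ with hk
    have hknn : (0:ℝ) ≤ (t - u) / T := div_nonneg (by linarith) hT.le
    have hklt : (t - u) / T < (k : ℝ) + 1 := Nat.lt_floor_add_one _
    have htu : t - u < (k + 1 : ℝ) * T := by
      have := (div_lt_iff₀ hT).mp hklt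
      linarith
    have h1 := hlow u t hut
    rw [hfint u t hut]
    nlinarith [h1]
  -- continuity of Z
  have hgII : ∀ a b : ℝ, IntervalIntegrable g volume a b := by
    intro a b
    rw [intervalIntegrable_iff]
    exact (hgloc.integrableOn_isCompact isCompact_uIcc).mono_set Set.Ioc_subset_Icc_self
  have hZcont : Continuous Z := by
    have : Z = fun t => Z 0 + ∫ s in (0:ℝ)..t, g s := by
      funext t
      have := hgint 0 t
      linarith
    rw [this]
    exact continuous_const.add (intervalIntegral.continuous_primitive hgII 0)
  -- key identity on intervals where Z is positive
  have hkey : ∀ u t : ℝ, u ≤ t → (∀ s ∈ Set.Ioc u t, 0 < Z s) →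
      Z t - Z u = ∫ s in u..t, f s := by
    intro u t hut hpos
    rw [hgint u t]
    apply intervalIntegral.integral_congr_ae
    filter_upwards [hgae] with s hs hmem
    rw [Set.uIoc_of_le hut] at hmem
    exact hs.1 (hpos s hmem)
  -- there is a zero of Z at some nonnegative time
  have hzero : ∃ t0 : ℝ, 0 ≤ t0 ∧ Z t0 = 0 := by
    by_contra hcon
    push_neg at hcon
    have hposall : ∀ t : ℝ, 0 ≤ t → 0 < Z t := fun t ht =>
      lt_of_le_of_ne (hZ0 t) (fun e => hcon t ht e.symm)
    obtain ⟨n, hn⟩ := exists_nat_gt (Z 0 / (c * τ - p * T))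
    have hnT : (0:ℝ) ≤ 0 + n * T := by positivity
    have hZn := hkey 0 (0 + n * T) hnT (fun s hs => hposall s hs.1.le)
    rw [hfint 0 (0 + n * T) hnT, hper_int 0 n] at hZn
    have hge : 0 ≤ Z (0 + n * T) := hZ0 _
    have : Z 0 / (c * τ - p * T) < n := hn
    have h2 : Z 0 < n * (c * τ - p * T) := by
      have := (div_lt_iff₀ hδ).mp this
      linarith
    nlinarith [hZn, hge]
  obtain ⟨t0, ht0, hZt0⟩ := hzero
  -- main bound for t ≥ t0
  have hmain : ∀ t : ℝ, t0 ≤ t → Z t ≤ c * T := by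
    intro t ht
    set S := Set.Icc t0 t ∩ Z ⁻¹' {0} with hS
    have hSne : S.Nonempty := ⟨t0, ⟨le_refl _, ht⟩, hZt0⟩
    have hScomp : IsCompact S :=
      isCompact_Icc.inter_right (IsClosed.preimage hZcont isClosed_singleton)
    set u := sSup S with hu
    have huS : u ∈ S := hScomp.sSup_mem hSne
    obtain ⟨⟨hut0, hut⟩, hZu⟩ := huS
    have hZu : Z u = 0 := hZu
    have hpos : ∀ s ∈ Set.Ioc u t, 0 < Z s := by
      intro s hs
      rcases lt_or_eq_of_le (hZ0 s) with hlt | heq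
      · exact hlt
      · exfalso
        have hsS : s ∈ S := ⟨⟨hut0.trans hs.1.le, hs.2⟩, heq.symm⟩
        have : s ≤ u := le_csSup hScomp.bddAbove hsS
        exact absurd this (not_le.mpr hs.1)
    have hkey2 := hkey u t hut hpos
    have hle := hfle u t hut
    have hk0 : (0:ℝ) ≤ (⌊(t - u) / T⌋₊ : ℝ) := Nat.cast_nonneg _
    have hpT : Z t ≤ p * T := by nlinarith [hkey2, hle, hZu]
    nlinarith [hpT]
  refine ⟨t0, hmain, ?_⟩
  apply Filter.limsup_le_of_le
  · exact Filter.isCoboundedUnder_le_of_le Filter.atTop (x := 0) hZ0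
  · filter_upwards [Filter.eventually_ge_atTop t0] with t ht using hmain t ht
end

section
/- (Necessity in the Stability Condition Lemma.) Let F ⊆ [0,1] be measurable, let 0 < p < c, let θ : ℝ → [0,1] be a position trajectory with period T > 0 and coverage time τ, and suppose c·τ ≤ p·T. Then every accumulation function Z for θ satisfies Z(t+T) ≥ Z(t) for all t; consequently, for every M, any accumulation function with Z(0) > M satisfies Z(kT) > M for every natural number k, so the field is not eventually bounded below any level independent of the initial condition. -/
open MeasureTheory Filter Set

/-- Necessity in the stability condition lemma: if `c·τ ≤ p·T` then every accumulation
function is nondecreasing from one cycle to the next, so the field is not eventually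
bounded below any level independent of initial conditions. -/
theorem stability_necessity (F : Set ℝ) (hF : MeasurableSet F) (p c : ℝ)
    (hp : 0 < p) (hpc : p < c) (θ : ℝ → ℝ) (T τ : ℝ)
    (htraj : IsTrajectory F θ T τ) (hunstab : c * τ ≤ p * T) :
    ∀ Z : ℝ → ℝ, IsAccumulation F p c θ Z →
      (∀ t : ℝ, Z t ≤ Z (t + T)) ∧
      (∀ M : ℝ, M < Z 0 → ∀ k : ℕ, M < Z ((k : ℝ) * T)) := by
  obtain ⟨hθ, hT, hτ, hper, hint⟩ := htraj
  intro Z hZ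
  obtain ⟨hZ0, g, hgloc, hFTC, hae⟩ := hZ
  set h : ℝ → ℝ := fun s => F.indicator (fun _ => (1 : ℝ)) (θ s) with hh
  have hval : ∀ s : ℝ, F.indicator (fun _ => (1 : ℝ)) (θ s) = 0 ∨
      F.indicator (fun _ => (1 : ℝ)) (θ s) = 1 := by
    intro s
    by_cases hs : θ s ∈ F
    · right; simp [Set.indicator_of_mem hs]
    · left; simp [Set.indicator_of_notMem hs]
  obtain ⟨g₀, hg₀m, hg₀⟩ := hgloc.aestronglyMeasurable.aemeasurable
  set w : ℝ → ℝ := fun t => if g₀ t < p then 1 else 0 with hw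
  have hwm : Measurable w :=
    Measurable.ite (measurableSet_lt hg₀m measurable_const) measurable_const measurable_const
  have hhw : h =ᵐ[volume] w := by
    filter_upwards [hae, hg₀] with t ht htg
    rcases hval t with h0 | h1
    · have hgp : g t = p := by
        rcases (hZ0 t).lt_or_eq with hzt | hzt
        · rw [ht.1 hzt, h0]; ring
        · rw [ht.2 hzt.symm, h0]
          simp [hp.le]
      have : ¬ g₀ t < p := by rw [← htg, hgp]; exact lt_irrefl p
      simp [hh, hw, h0, this]
    · have hgp : g t < p := by
        rcases (hZ0 t).lt_or_eq with hzt | hzt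
        · rw [ht.1 hzt, h1]; linarith
        · rw [ht.2 hzt.symm, h1]
          have h2 : p - c * 1 ≤ 0 := by linarith
          rw [max_eq_right h2]; exact hp
      have : g₀ t < p := by rw [← htg]; exact hgp
      simp [hh, hw, h1, this]
  have hhint : ∀ a b : ℝ, IntervalIntegrable h volume a b := by
    intro a b
    rw [intervalIntegrable_iff]
    have hwint : IntegrableOn w (Set.uIoc a b) volume := by
      apply Measure.integrableOn_of_bounded (M := 1) measure_Ioc_lt_top.ne
        hwm.aestronglyMeasurable
      filter_upwards with x
      rcases le_or_gt p (g₀ x) with hx | hx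
      · simp [hw, not_lt.mpr hx]
      · simp [hw, hx]
    exact hwint.congr (ae_restrict_of_ae hhw.symm)
  have key : ∀ t : ℝ, Z t ≤ Z (t + T) := by
    intro t
    have h1 : Z (t + T) - Z t = ∫ s in t..(t + T), g s := hFTC t (t + T)
    have hintgr : IntervalIntegrable (fun s => p - c * h s) volume t (t + T) :=
      intervalIntegrable_const.sub ((hhint t (t + T)).const_mul c)
    have h2 : (∫ s in t..(t + T), (p - c * h s)) ≤ ∫ s in t..(t + T), g s := by
      apply intervalIntegral.integral_mono_ae (by linarith : t ≤ t + T) hintgr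
        (by rw [intervalIntegrable_iff]
            exact (hgloc.integrableOn_isCompact isCompact_uIcc).mono_set Set.uIoc_subset_uIcc)
      filter_upwards [hae] with s hs
      rcases (hZ0 s).lt_or_eq with hzs | hzs
      · rw [hs.1 hzs]
      · rw [hs.2 hzs.symm]; exact le_max_left _ _
    have h3 : (∫ s in t..(t + T), (p - c * h s)) = p * T - c * τ := by
      rw [intervalIntegral.integral_sub intervalIntegrable_const
          ((hhint t (t + T)).const_mul c),
        intervalIntegral.integral_const, intervalIntegral.integral_const_mul, hint t]
      simp; ring
    rw [h3] at h2
    linarith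
  refine ⟨key, ?_⟩
  intro M hM k
  induction k with
  | zero => simpa using hM
  | succ n ih =>
    have hk := key ((n : ℝ) * T)
    have : ((n : ℝ) + 1) * T = (n : ℝ) * T + T := by ring
    push_cast
    rw [this]
    linarith
end

section
/- (Comparison of solutions.) Let F ⊆ [0,1] be measurable, let 0 < p < c, and let θ : ℝ → [0,1] be a position trajectory with period T > 0 and coverage time τ. If Z₁ and Z₂ are accumulation functions for θ and Z₁(t₀) ≥ Z₂(t₀) for some t₀, then Z₁(t) ≥ Z₂(t) for all t ≥ t₀. -/
open MeasureTheory Filter Set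

lemma cont_of_primitive (Z g : ℝ → ℝ) (hg : MeasureTheory.LocallyIntegrable g MeasureTheory.volume)
    (hZg : ∀ a b : ℝ, Z b - Z a = ∫ s in a..b, g s) : Continuous Z := by
  have : Z = fun b => Z 0 + ∫ s in (0:ℝ)..b, g s := by
    funext b; have := hZg 0 b; linarith
  rw [this]
  exact continuous_const.add (intervalIntegral.continuous_primitive
    (fun a b => (hg.integrableOn_isCompact isCompact_uIcc).intervalIntegrable) 0)


/-- Comparison of solutions: an accumulation function that starts above another
stays above it for all later times. -/
theorem accumulation_comparison (F : Set ℝ) (hF : MeasurableSet F) (p c : ℝ)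
    (hp : 0 < p) (hpc : p < c) (θ : ℝ → ℝ) (T τ : ℝ)
    (htraj : IsTrajectory F θ T τ) (Z₁ Z₂ : ℝ → ℝ)
    (hZ₁ : IsAccumulation F p c θ Z₁) (hZ₂ : IsAccumulation F p c θ Z₂)
    (t₀ : ℝ) (h₀ : Z₂ t₀ ≤ Z₁ t₀) :
    ∀ t : ℝ, t₀ ≤ t → Z₂ t ≤ Z₁ t := by
  obtain ⟨hZ₁pos, g₁, hg₁loc, hg₁int, hg₁ae⟩ := hZ₁
  obtain ⟨hZ₂pos, g₂, hg₂loc, hg₂int, hg₂ae⟩ := hZ₂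
  have hcont₁ : Continuous Z₁ := cont_of_primitive Z₁ g₁ hg₁loc hg₁int
  have hcont₂ : Continuous Z₂ := cont_of_primitive Z₂ g₂ hg₂loc hg₂int
  intro t ht
  by_contra hlt
  push_neg at hlt
  -- S = set of points in [t₀, t] where Z₂ ≤ Z₁
  set S : Set ℝ := {s | s ∈ Set.Icc t₀ t ∧ Z₂ s ≤ Z₁ s} with hS
  have hSne : S.Nonempty := ⟨t₀, ⟨le_refl _, ht⟩, h₀⟩
  have hSbdd : BddAbove S := ⟨t, fun x hx => hx.1.2⟩
  have hSclosed : IsClosed S := by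
    have : S = Set.Icc t₀ t ∩ {s | Z₂ s ≤ Z₁ s} := rfl
    rw [this]
    exact isClosed_Icc.inter (isClosed_le hcont₂ hcont₁)
  set s₀ := sSup S with hs₀
  have hs₀mem : s₀ ∈ S := hSclosed.csSup_mem hSne hSbdd
  have hs₀le : s₀ ≤ t := hs₀mem.1.2
  have hs₀ge : t₀ ≤ s₀ := hs₀mem.1.1
  have hs₀W : Z₂ s₀ ≤ Z₁ s₀ := hs₀mem.2
  -- on (s₀, t], Z₁ < Z₂
  have hpos : ∀ u ∈ Set.Ioc s₀ t, Z₁ u < Z₂ u := by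
    intro u hu
    by_contra hle
    push_neg at hle
    have : u ∈ S := ⟨⟨hs₀ge.trans hu.1.le, hu.2⟩, hle⟩
    exact absurd (le_csSup hSbdd this) (not_le.mpr hu.1)
  -- a.e. on Ioc s₀ t : g₂ ≤ g₁
  have haemono : g₂ ≤ᵐ[MeasureTheory.volume.restrict (Set.Icc s₀ t)] g₁ := by
    have h1 := MeasureTheory.ae_restrict_of_ae (μ := MeasureTheory.volume)
      (s := Set.Ioc s₀ t) hg₁ae
    have h2 := MeasureTheory.ae_restrict_of_ae (μ := MeasureTheory.volume)
      (s := Set.Ioc s₀ t) hg₂ae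
    have h3 := MeasureTheory.ae_restrict_mem (μ := MeasureTheory.volume)
      (measurableSet_Ioc (a := s₀) (b := t))
    have hioc : g₂ ≤ᵐ[MeasureTheory.volume.restrict (Set.Ioc s₀ t)] g₁ := by
      filter_upwards [h1, h2, h3] with u h1u h2u h3u
      have hZ₂u : 0 < Z₂ u := lt_of_le_of_lt (hZ₁pos u) (hpos u h3u)
      have hg2 : g₂ u = p - c * F.indicator (fun _ => (1 : ℝ)) (θ u) := h2u.1 hZ₂u
      rcases eq_or_lt_of_le (hZ₁pos u) with h | h
      · have hg1 : g₁ u = max (p - c * F.indicator (fun _ => (1 : ℝ)) (θ u)) 0 :=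
          h1u.2 h.symm
        rw [hg1, hg2]; exact le_max_left _ _
      · rw [h1u.1 h, hg2]
    rwa [MeasureTheory.Measure.restrict_congr_set Ioc_ae_eq_Icc] at hioc
  have hint : (∫ s in s₀..t, g₂ s) ≤ ∫ s in s₀..t, g₁ s :=
    intervalIntegral.integral_mono_ae_restrict hs₀le
      (hg₂loc.integrableOn_isCompact isCompact_uIcc).intervalIntegrable (hg₁loc.integrableOn_isCompact isCompact_uIcc).intervalIntegrable haemono
  have e1 := hg₁int s₀ t
  have e2 := hg₂int s₀ t
  linarith
end

section
/- (Propagation of zeros.) Let F ⊆ [0,1] be measurable, let 0 < p < c, let θ : ℝ → [0,1] be a position trajectory with period T > 0 and coverage time τ, and let Z be an accumulation function for θ. If Z(t*) = 0 for some t*, then Z(t* + T) = 0. -/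
open MeasureTheory Filter Set

set_option maxHeartbeats 1000000 in
/-- Propagation of zeros: if the accumulation function vanishes at some time, it also
vanishes one period later. -/
theorem zero_propagation (F : Set ℝ) (hF : MeasurableSet F) (p c : ℝ)
    (hp : 0 < p) (hpc : p < c) (θ : ℝ → ℝ) (T τ : ℝ)
    (htraj : IsTrajectory F θ T τ) (Z : ℝ → ℝ)
    (hZ : IsAccumulation F p c θ Z) (tstar : ℝ) (hzero : Z tstar = 0) :
    Z (tstar + T) = 0 := by
  obtain ⟨hθ, hT, hτ, hper, hint⟩ := htraj
  obtain ⟨hZnn, g, hgint, hZab, hae⟩ := hZ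
  set f : ℝ → ℝ := fun t => p - c * F.indicator (fun _ => (1 : ℝ)) (θ t) with hf
  have hfper : ∀ t, f (t + T) = f t := fun t => by simp only [hf, hper t]
  have hgii : ∀ a b : ℝ, IntervalIntegrable g volume a b := fun a b =>
    (hgint.integrableOn_isCompact isCompact_uIcc).intervalIntegrable
  -- g ≥ f a.e.
  have hge : ∀ᵐ t : ℝ, f t ≤ g t := by
    filter_upwards [hae] with t ht
    rcases (hZnn t).lt_or_eq with h | h
    · rw [ht.1 h]
    · rw [ht.2 h.symm]; exact le_max_left _ _
  -- continuity of Z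
  have hZcont : Continuous Z := by
    have hZeq : Z = fun t => Z 0 + ∫ s in (0:ℝ)..t, g s := by
      funext t; have := hZab 0 t; linarith
    rw [hZeq]
    exact continuous_const.add (intervalIntegral.continuous_primitive (fun a b => hgii a b) 0)
  by_contra hne
  have hpos : 0 < Z (tstar + T) := (hZnn _).lt_of_ne (Ne.symm hne)
  set S : Set ℝ := Set.Icc tstar (tstar + T) ∩ {t | Z t = 0} with hS
  have hScomp : IsCompact S :=
    isCompact_Icc.inter_right (isClosed_eq hZcont continuous_const)
  have hSne : S.Nonempty := ⟨tstar, ⟨le_refl _, by linarith⟩, hzero⟩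
  set s := sSup S with hs
  have hsS : s ∈ S := hScomp.sSup_mem hSne
  obtain ⟨⟨hs1, hs2⟩, hs0⟩ := hsS
  have hslt : s < tstar + T := by
    rcases lt_or_eq_of_le hs2 with h | h
    · exact h
    · exact absurd (h ▸ hs0) hpos.ne'
  have hZposIoc : ∀ t ∈ Set.Ioc s (tstar + T), 0 < Z t := by
    rintro t ⟨ht1, ht2⟩
    rcases (hZnn t).lt_or_eq with h | h
    · exact h
    · exact absurd (le_csSup hScomp.bddAbove ⟨⟨hs1.trans ht1.le, ht2⟩, h.symm⟩)
        (not_le.mpr ht1)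
  -- a.e., Z > 0 implies g = f; translate by T
  have h1ae : ∀ᵐ t : ℝ, 0 < Z t → g t = f t := by
    filter_upwards [hae] with t ht using ht.1
  have hqmp : Measure.QuasiMeasurePreserving (fun x : ℝ => x + T) volume volume :=
    (measurePreserving_add_right (volume : Measure ℝ) T).quasiMeasurePreserving
  have htrans : ∀ᵐ x : ℝ, 0 < Z (x + T) → g (x + T) = f (x + T) :=
    hqmp.ae (p := fun t => 0 < Z t → g t = f t) h1ae
  have hne' : ∀ᵐ x : ℝ, x ≠ s - T :=
    ae_iff.mpr (by simp)
  -- key monotonicity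
  have hgii2 : IntervalIntegrable (fun x => g (x + T)) volume (s - T) tstar := by
    have h := (hgii s (tstar + T)).comp_add_right T
    have e2 : tstar + T - T = tstar := by ring
    rwa [e2] at h
  have hmono : (∫ x in (s - T)..tstar, g (x + T)) ≤ ∫ x in (s - T)..tstar, g x := by
    refine intervalIntegral.integral_mono_ae_restrict (by linarith) hgii2 (hgii _ _) ?_
    filter_upwards [ae_restrict_of_ae hge, ae_restrict_of_ae htrans, ae_restrict_of_ae hne',
      ae_restrict_mem measurableSet_Icc] with x h1 h2 h3 h4
    have hx1 : s - T < x := lt_of_le_of_ne h4.1 (Ne.symm h3)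
    have hxT : x + T ∈ Set.Ioc s (tstar + T) := ⟨by linarith, by linarith [h4.2]⟩
    calc g (x + T) = f (x + T) := h2 (hZposIoc _ hxT)
      _ = f x := hfper x
      _ ≤ g x := h1
  have hshift : (∫ x in (s - T)..tstar, g (x + T)) = ∫ x in s..(tstar + T), g x := by
    rw [intervalIntegral.integral_comp_add_right]
    norm_num
  have h1 : Z tstar - Z (s - T) = ∫ x in (s - T)..tstar, g x := hZab _ _
  have h2 : Z (tstar + T) - Z s = ∫ x in s..(tstar + T), g x := hZab _ _
  have hZs : Z s = 0 := hs0
  have := hZnn (s - T)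
  linarith [hmono, hshift, h1, h2]
end

section
/- (Field Reduced to Zero Lemma.) Let F ⊆ [0,1] be measurable, let 0 < p < c, let θ : ℝ → [0,1] be a position trajectory with period T > 0 and coverage time τ, and suppose the stability condition c·τ > p·T holds. Then for every accumulation function Z for θ there exists a time t* > T such that Z(t* + a·T) = 0 for every natural number a. -/
open MeasureTheory Filter Set

/-- Field reduced to zero: under the stability condition `c·τ > p·T`, every accumulation
function has a time `t* > T` at which, and at every period thereafter, it is zero. -/
theorem field_reduced_to_zero (F : Set ℝ) (hF : MeasurableSet F) (p c : ℝ)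
    (hp : 0 < p) (hpc : p < c) (θ : ℝ → ℝ) (T τ : ℝ)
    (htraj : IsTrajectory F θ T τ) (hstab : p * T < c * τ)
    (Z : ℝ → ℝ) (hZ : IsAccumulation F p c θ Z) :
    ∃ tstar : ℝ, T < tstar ∧ ∀ a : ℕ, Z (tstar + (a : ℝ) * T) = 0 := by
  obtain ⟨hθmem, hT, hτ0, hper, hint⟩ := htraj
  obtain ⟨hZnn, g, hgloc, hgint, hgae⟩ := hZ
  have hcpos : 0 < c := hp.trans hpc
  have hτpos : 0 < τ := by nlinarith [mul_pos hp hT]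
  set φ : ℝ → ℝ := fun s => F.indicator (fun _ => (1 : ℝ)) (θ s) with hφdef
  set f : ℝ → ℝ := fun s => p - c * φ s with hfdef
  -- φ is interval integrable on each period
  have hφI : ∀ t : ℝ, IntervalIntegrable φ volume t (t + T) := by
    intro t
    by_contra h
    have h0 := intervalIntegral.integral_undef h
    have h1 : (∫ s in t..(t + T), φ s) = τ := hint t
    rw [h0] at h1
    exact absurd h1.symm (ne_of_gt hτpos)
  have hφloc : LocallyIntegrable φ volume := by
    intro x
    have hInt : IntegrableOn φ (Ioc (x - T / 2) (x - T / 2 + T)) volume := (hφI (x - T / 2)).1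
    refine ⟨Ioo (x - T / 2) (x + T / 2), Ioo_mem_nhds (by linarith) (by linarith), ?_⟩
    apply hInt.mono_set
    intro y hy
    exact ⟨hy.1, by linarith [hy.2]⟩
  have hφII : ∀ a b : ℝ, IntervalIntegrable φ volume a b := by
    intro a b
    rw [intervalIntegrable_iff]
    exact (hφloc.integrableOn_isCompact isCompact_uIcc).mono_set Ioc_subset_Icc_self
  have hfII : ∀ a b : ℝ, IntervalIntegrable f volume a b := fun a b =>
    intervalIntegrable_const.sub ((hφII a b).const_mul c)
  have hgII : ∀ a b : ℝ, IntervalIntegrable g volume a b := by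
    intro a b
    rw [intervalIntegrable_iff]
    exact (hgloc.integrableOn_isCompact isCompact_uIcc).mono_set Ioc_subset_Icc_self
  -- Z is continuous
  have hZcont : Continuous Z := by
    have h1 : Continuous fun x => Z 0 + ∫ s in (0:ℝ)..x, g s :=
      continuous_const.add (intervalIntegral.continuous_primitive hgII 0)
    apply h1.congr
    intro x
    have := hgint 0 x
    linarith
  -- the integral of f over one period
  have hIper : ∀ t : ℝ, (∫ s in t..(t + T), f s) = p * T - c * τ := by
    intro t
    have h1 : (∫ s in t..(t + T), f s)
        = (∫ _ in t..(t + T), (p : ℝ)) - ∫ s in t..(t + T), c * φ s := by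
      apply intervalIntegral.integral_sub intervalIntegrable_const ((hφI t).const_mul c)
    have h2 : (∫ s in t..(t + T), c * φ s) = c * τ := by
      rw [intervalIntegral.integral_const_mul, hint t]
    rw [h1, h2, intervalIntegral.integral_const, smul_eq_mul]
    ring
  set G : ℝ → ℝ := fun u => ∫ s in (0:ℝ)..u, f s with hGdef
  have hGsub : ∀ a b : ℝ, (∫ s in a..b, f s) = G b - G a := by
    intro a b
    have := intervalIntegral.integral_add_adjacent_intervals (hfII 0 a) (hfII a b)
    simp only [hGdef]
    linarith
  have hGper : ∀ u : ℝ, G (u + T) = G u + (p * T - c * τ) := by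
    intro u
    have h := hGsub u (u + T)
    rw [hIper u] at h
    linarith
  have hGnat : ∀ (x : ℝ) (k : ℕ), G (x + (k : ℝ) * T) = G x + (k : ℝ) * (p * T - c * τ) := by
    intro x k
    induction k with
    | zero => simp
    | succ n ih =>
      have e : x + ((n + 1 : ℕ) : ℝ) * T = (x + (n : ℝ) * T) + T := by push_cast; ring
      rw [e, hGper, ih]
      push_cast
      ring
  set P : ℝ → ℝ := fun u => T * G u + (c * τ - p * T) * u with hPdef
  have hPper : Function.Periodic P T := by
    intro x
    simp only [hPdef]
    rw [hGper x]
    ring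
  have hPcont : Continuous P := by
    apply (continuous_const.mul (intervalIntegral.continuous_primitive hfII 0)).add
    exact continuous_const.mul continuous_id
  obtain ⟨x0, hx0mem, hx0min⟩ :=
    isCompact_Icc.exists_isMinOn (nonempty_Icc.2 hT.le) hPcont.continuousOn (f := P)
  have hmin : ∀ u : ℝ, P x0 ≤ P u := by
    intro u
    obtain ⟨y, hy, hPy⟩ := hPper.exists_mem_Ico₀ hT u
    rw [hPy]
    exact hx0min (Ico_subset_Icc_self hy)
  have hδ : 0 < c * τ - p * T := by linarith
  -- key phase property: G at good-phase points is a running minimum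
  have hGle : ∀ (m : ℕ) (s : ℝ), s ≤ x0 + (m : ℝ) * T → G (x0 + (m : ℝ) * T) ≤ G s := by
    intro m s hs
    have hb : P (x0 + (m : ℝ) * T) = P x0 := hPper.nat_mul m x0
    have h1 : P x0 ≤ P s := hmin s
    have h2 : T * G (x0 + (m : ℝ) * T)
        = P (x0 + (m : ℝ) * T) - (c * τ - p * T) * (x0 + (m : ℝ) * T) := by
      simp only [hPdef]; ring
    have h3 : T * G s = P s - (c * τ - p * T) * s := by
      simp only [hPdef]; ring
    have h4 : (c * τ - p * T) * s ≤ (c * τ - p * T) * (x0 + (m : ℝ) * T) := by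
      exact mul_le_mul_of_nonneg_left hs hδ.le
    have h5 : T * G (x0 + (m : ℝ) * T) ≤ T * G s := by linarith
    exact le_of_mul_le_mul_left h5 hT
  -- if Z is positive on (a, b], then Z evolves like the integral of f
  have hZf : ∀ a b : ℝ, a ≤ b → (∀ t ∈ Ioc a b, 0 < Z t) → Z b - Z a = G b - G a := by
    intro a b hab hpos
    rw [hgint a b, ← hGsub a b]
    apply intervalIntegral.integral_congr_ae
    filter_upwards [hgae] with t ht htmem
    rw [Set.uIoc_of_le hab] at htmem
    exact ht.1 (hpos t htmem)
  -- key comparison lemma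
  have key : ∀ a b : ℝ, a ≤ b → (∀ s, a ≤ s → s ≤ b → G b ≤ G s) →
      Z b ≤ max (Z a + (G b - G a)) 0 := by
    intro a b hab hGle'
    by_cases hzero : ∃ s, s ∈ Icc a b ∧ Z s = 0
    · set K : Set ℝ := Icc a b ∩ {s | Z s = 0} with hKdef
      have hKne : K.Nonempty := by
        obtain ⟨s, hs1, hs2⟩ := hzero
        exact ⟨s, hs1, hs2⟩
      have hKcl : IsClosed K :=
        isClosed_Icc.inter (isClosed_singleton.preimage hZcont)
      have hKbdd : BddAbove K := ⟨b, fun x hx => hx.1.2⟩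
      have hs0K : sSup K ∈ K := hKcl.csSup_mem hKne hKbdd
      set s0 := sSup K with hs0def
      rcases eq_or_lt_of_le hs0K.1.2 with heq | hlt
      · have : Z b = 0 := by rw [← heq]; exact hs0K.2
        rw [this]
        exact le_max_right _ _
      · have hpos : ∀ t ∈ Ioc s0 b, 0 < Z t := by
          intro t ht
          rcases (hZnn t).lt_or_eq with h | h
          · exact h
          · exfalso
            have htK : t ∈ K := ⟨⟨le_trans hs0K.1.1 ht.1.le, ht.2⟩, h.symm⟩
            have := le_csSup hKbdd htK
            linarith [ht.1]
        have hzb := hZf s0 b hlt.le hpos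
        have hZs0 : Z s0 = 0 := hs0K.2
        have hle0 := hGle' s0 hs0K.1.1 hs0K.1.2
        have : Z b ≤ 0 := by linarith
        exact this.trans (le_max_right _ _)
    · have hpos : ∀ t ∈ Ioc a b, 0 < Z t := by
        intro t ht
        rcases (hZnn t).lt_or_eq with h | h
        · exact h
        · exact absurd ⟨t, ⟨ht.1.le, ht.2⟩, h.symm⟩ hzero
      have := hZf a b hab hpos
      have hb : Z b = Z a + (G b - G a) := by linarith
      rw [hb]
      exact le_max_left _ _
  -- choose N large
  obtain ⟨N, hN⟩ := exists_nat_gt (max (Z x0 / (c * τ - p * T)) 1)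
  have hN1 : (1 : ℝ) < N := lt_of_le_of_lt (le_max_right _ _) hN
  have hNδ : Z x0 < (N : ℝ) * (c * τ - p * T) := by
    have h1 : Z x0 / (c * τ - p * T) < (N : ℝ) := lt_of_le_of_lt (le_max_left _ _) hN
    exact (div_lt_iff₀ hδ).1 h1
  set tstar : ℝ := x0 + (N : ℝ) * T with htstardef
  have htstarT : T < tstar := by nlinarith [hx0mem.1]
  have hZtstar : Z tstar = 0 := by
    have h1 := key x0 tstar (by nlinarith [hx0mem.1]) (fun s _ h2 => hGle N s h2)
    have h2 : G tstar - G x0 = (N : ℝ) * (p * T - c * τ) := by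
      have := hGnat x0 N
      simp only [htstardef]
      linarith
    have h3 : Z x0 + (G tstar - G x0) ≤ 0 := by
      rw [h2]; nlinarith
    rw [max_eq_right h3] at h1
    exact le_antisymm h1 (hZnn tstar)
  refine ⟨tstar, htstarT, ?_⟩
  intro a
  have hb : tstar + (a : ℝ) * T = x0 + ((N + a : ℕ) : ℝ) * T := by
    simp only [htstardef]; push_cast; ring
  have h1 := key tstar (tstar + (a : ℝ) * T)
    (by nlinarith [Nat.cast_nonneg (α := ℝ) a])
    (fun s _ hs2 => by rw [hb] at hs2 ⊢; exact hGle (N + a) s hs2)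
  have h2 : G (tstar + (a : ℝ) * T) - G tstar = (a : ℝ) * (p * T - c * τ) := by
    have e1 := hGnat x0 (N + a)
    have e2 := hGnat x0 N
    rw [hb]
    simp only [htstardef]
    push_cast at e1 ⊢
    linarith
  have h3 : Z tstar + (G (tstar + (a : ℝ) * T) - G tstar) ≤ 0 := by
    rw [h2, hZtstar]
    have : (a : ℝ) * (p * T - c * τ) ≤ 0 := by
      apply mul_nonpos_of_nonneg_of_nonpos (Nat.cast_nonneg a)
      linarith
    linarith
  rw [max_eq_right h3] at h1
  exact le_antisymm h1 (hZnn (tstar + (a : ℝ) * T))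
end

section
/- (Steady-State Field Proposition.) Let F ⊆ [0,1] be measurable, let 0 < p < c, let θ : ℝ → [0,1] be a position trajectory with period T > 0 and coverage time τ, and suppose the stability condition c·τ > p·T holds. Then there exists a T-periodic function Z̄ : ℝ → ℝ with Z̄(t) ≥ 0 for all t, such that: (i) Z̄ vanishes at some time; and (ii) for every accumulation function Z for θ (regardless of initial value) there exists a finite time t* ≥ 0 with Z(t) = Z̄(t) for all t ≥ t*. In particular, the steady-state profile is independent of the initial condition. -/
open MeasureTheory Filter Set

/-- Steady-state field: under the stability condition there is a nonnegative `T`-periodic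
steady-state profile, vanishing at some time, which every accumulation function reaches
in finite time, independently of initial conditions. -/
theorem steady_state_field (F : Set ℝ) (hF : MeasurableSet F) (p c : ℝ)
    (hp : 0 < p) (hpc : p < c) (θ : ℝ → ℝ) (T τ : ℝ)
    (htraj : IsTrajectory F θ T τ) (hstab : p * T < c * τ) :
    ∃ Zbar : ℝ → ℝ, (∀ t : ℝ, 0 ≤ Zbar t) ∧ (∀ t : ℝ, Zbar (t + T) = Zbar t) ∧
      (∃ t : ℝ, Zbar t = 0) ∧
      (∀ Z : ℝ → ℝ, IsAccumulation F p c θ Z →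
        ∃ tstar : ℝ, 0 ≤ tstar ∧ ∀ t : ℝ, tstar ≤ t → Z t = Zbar t) := by
  obtain ⟨hθmem, hT, hτ0, hper, hcov⟩ := htraj
  have hc : 0 < c := hp.trans hpc
  have hτ : 0 < τ := by nlinarith
  set h : ℝ → ℝ := fun s => F.indicator (fun _ => (1 : ℝ)) (θ s) with hh
  -- integrability of h on each period window
  have hInt1 : ∀ t : ℝ, IntervalIntegrable h volume t (t + T) := by
    intro t
    by_contra hcon
    have := intervalIntegral.integral_undef hcon
    rw [hcov t] at this
    exact hτ.ne' this
  -- integrability of h on any interval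
  have hIntn : ∀ (n : ℕ) (a : ℝ), IntervalIntegrable h volume a (a + n * T) := by
    intro n
    induction n with
    | zero => intro a; simpa using intervalIntegrable_const (c := (0:ℝ)) |>.mono_set (by simp)
    | succ n ih =>
      intro a
      have h1 := ih a
      have h2 := hInt1 (a + n * T)
      have : a + n * T + T = a + (n + 1 : ℕ) * T := by push_cast; ring
      rw [this] at h2
      exact h1.trans h2
  have hIntab' : ∀ a b : ℝ, a ≤ b → IntervalIntegrable h volume a b := by
    intro a b hab
    obtain ⟨n, hn⟩ := exists_nat_ge ((b - a) / T)
    have hbn : b ≤ a + n * T := by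
      rw [div_le_iff₀ hT] at hn; linarith
    exact (hIntn n a).mono_set
      (uIcc_subset_uIcc left_mem_uIcc (by rw [uIcc_of_le (hab.trans hbn)]; exact ⟨hab, hbn⟩))
  have hIntab : ∀ a b : ℝ, IntervalIntegrable h volume a b := by
    intro a b
    rcases le_total a b with hab | hba
    · exact hIntab' a b hab
    · exact (hIntab' b a hba).symm
  set f : ℝ → ℝ := fun s => p - c * h s with hf
  have hIntf : ∀ a b : ℝ, IntervalIntegrable f volume a b := fun a b =>
    (intervalIntegrable_const).sub ((hIntab a b).const_mul c)
  have hfint : ∀ t : ℝ, (∫ s in t..(t + T), f s) = p * T - c * τ := by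
    intro t
    rw [hf]
    rw [intervalIntegral.integral_sub intervalIntegrable_const ((hIntab t (t+T)).const_mul c),
      intervalIntegral.integral_const_mul, hcov t, intervalIntegral.integral_const]
    simp; ring
  set V : ℝ → ℝ := fun t => ∫ s in (0:ℝ)..t, f s with hV
  have hV0 : V 0 = 0 := intervalIntegral.integral_same
  have hVsub : ∀ a b : ℝ, V b - V a = ∫ s in a..b, f s := fun a b =>
    intervalIntegral.integral_interval_sub_left (hIntf 0 b) (hIntf 0 a)
  have hVcont : Continuous V := intervalIntegral.continuous_primitive hIntf 0
  set Δ : ℝ := p * T - c * τ with hΔdef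
  have hΔ : Δ < 0 := by rw [hΔdef]; linarith
  have hVper : ∀ t : ℝ, V (t + T) = V t + Δ := by
    intro t
    have := hVsub t (t + T)
    rw [hfint t] at this
    linarith
  have hVk : ∀ (k : ℕ) (t : ℝ), V (t + k * T) = V t + k * Δ := by
    intro k
    induction k with
    | zero => simp
    | succ k ih =>
      intro t
      have h1 : t + ((k : ℝ) + 1) * T = (t + k * T) + T := by ring
      push_cast
      rw [h1, hVper, ih]
      ring
  -- attained minimum helper
  have hmin : ∀ a b : ℝ, a ≤ b → ∃ s ∈ Icc a b, IsLeast (V '' Icc a b) (V s) := by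
    intro a b hab
    obtain ⟨s, hs, hsmin⟩ := isCompact_Icc.exists_isMinOn (nonempty_Icc.2 hab) hVcont.continuousOn
    refine ⟨s, hs, mem_image_of_mem _ hs, ?_⟩
    rintro _ ⟨x, hx, rfl⟩
    exact hsmin hx
  set Zb : ℝ → ℝ := fun t => V t - sInf (V '' Icc (t - T) t) with hZb
  -- nonnegativity of Zb
  have hZbnn : ∀ t : ℝ, 0 ≤ Zb t := by
    intro t
    obtain ⟨s, hs, hls⟩ := hmin (t - T) t (by linarith)
    rw [hZb]
    simp only
    rw [hls.csInf_eq]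
    have : V s ≤ V t := hls.2 (mem_image_of_mem _ (by constructor <;> linarith))
    linarith
  -- periodicity of Zb
  have hZbper : ∀ t : ℝ, Zb (t + T) = Zb t := by
    intro t
    obtain ⟨s, hs, hls⟩ := hmin (t - T) t (by linarith)
    have h2 : IsLeast (V '' Icc (t + T - T) (t + T)) (V (s + T)) := by
      constructor
      · exact mem_image_of_mem _ (by constructor <;> [linarith [hs.1]; linarith [hs.2]])
      · rintro _ ⟨x, hx, rfl⟩
        have hx' : x - T ∈ Icc (t - T) t := by
          constructor <;> [linarith [hx.1]; linarith [hx.2]]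
        have : V s ≤ V (x - T) := hls.2 (mem_image_of_mem _ hx')
        have hxeq : V x = V (x - T) + Δ := by
          have := hVper (x - T); rw [sub_add_cancel] at this; rw [this]
        rw [hVper s, hxeq]
        linarith
    rw [hZb]
    simp only
    rw [h2.csInf_eq, hls.csInf_eq, hVper t, hVper s]
    ring
  -- Zb vanishes somewhere
  have hZbzero : ∃ t : ℝ, Zb t = 0 := by
    obtain ⟨t0, ht0, hls0⟩ := hmin 0 T hT.le
    refine ⟨t0, ?_⟩
    have hls : IsLeast (V '' Icc (t0 - T) t0) (V t0) := by
      constructor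
      · exact mem_image_of_mem _ (by constructor <;> linarith [ht0.1, ht0.2])
      · rintro _ ⟨x, hx, rfl⟩
        rcases le_or_gt 0 x with hx0 | hx0
        · exact hls0.2 (mem_image_of_mem _ ⟨hx0, hx.2.trans ht0.2⟩)
        · have hmem : x + T ∈ Icc (0:ℝ) T := by
            constructor <;> [linarith [hx.1, ht0.1]; linarith [hx0]]
          have h1 : V t0 ≤ V (x + T) := hls0.2 (mem_image_of_mem _ hmem)
          rw [hVper x] at h1
          linarith
    rw [hZb]
    simp only
    rw [hls.csInf_eq]
    ring
  -- shift helper: any point of [0,t] is dominated by a point of the last window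
  have hshift : ∀ s t : ℝ, 0 ≤ s → s ≤ t → ∃ s', s' ∈ Icc (t - T) t ∧ V s' ≤ V s := by
    intro s t hs hst
    set x : ℝ := (t - s) / T with hx
    have hx0 : 0 ≤ x := div_nonneg (by linarith) hT.le
    set k : ℕ := ⌊x⌋.toNat with hk
    have hcast : ((k : ℤ) : ℝ) = (k : ℝ) := by push_cast; ring
    have hkz : (k : ℤ) = ⌊x⌋ := by rw [hk]; exact Int.toNat_of_nonneg (Int.floor_nonneg.2 hx0)
    have hkx : (k : ℝ) ≤ x := by rw [← hcast, hkz]; exact Int.floor_le x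
    have hxk : x < k + 1 := by rw [← hcast, hkz]; exact Int.lt_floor_add_one x
    have h1 : (k : ℝ) * T ≤ t - s := by
      rw [hx] at hkx
      calc (k:ℝ) * T ≤ (t - s) / T * T := by
            exact mul_le_mul_of_nonneg_right hkx hT.le
        _ = t - s := by field_simp
    have h2 : t - s < ((k : ℝ) + 1) * T := by
      rw [hx] at hxk
      have := mul_lt_mul_of_pos_right hxk hT
      rwa [div_mul_cancel₀ _ hT.ne'] at this
    refine ⟨s + k * T, ⟨by nlinarith, by linarith⟩, ?_⟩
    rw [hVk k s]
    nlinarith [mul_nonneg (Nat.cast_nonneg k : (0:ℝ) ≤ k) (neg_nonneg.2 hΔ.le)]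
  refine ⟨Zb, hZbnn, hZbper, hZbzero, ?_⟩
  rintro Z ⟨hZ0, g, hg, hZint, hae⟩
  have hae' : ∀ᵐ s : ℝ, (0 < Z s → g s = f s) ∧ (Z s = 0 → g s = max (f s) 0) := hae
  have hIntg : ∀ a b : ℝ, IntervalIntegrable g volume a b := fun a b =>
    (hg.integrableOn_isCompact isCompact_uIcc).intervalIntegrable
  have hZcont : Continuous Z := by
    have hZeq : Z = fun t => Z 0 + ∫ s in (0:ℝ)..t, g s :=
      funext fun t => by have := hZint 0 t; linarith
    rw [hZeq]
    exact continuous_const.add (intervalIntegral.continuous_primitive hIntg 0)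
  set W : ℝ → ℝ := fun t => Z t - V t with hW
  have hWcont : Continuous W := hZcont.sub hVcont
  have hgf : ∀ᵐ s : ℝ, 0 ≤ g s - f s := by
    filter_upwards [hae'] with s hs
    rcases (hZ0 s).lt_or_eq with hpos | hzero
    · rw [hs.1 hpos]; simp
    · rw [hs.2 hzero.symm]
      have := le_max_left (f s) 0
      linarith
  have hWsub : ∀ a b : ℝ, W b - W a = ∫ s in a..b, (g s - f s) := by
    intro a b
    rw [intervalIntegral.integral_sub (hIntg a b) (hIntf a b)]
    have h1 := hZint a b
    have h2 := hVsub a b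
    have e1 : W b = Z b - V b := rfl
    have e2 : W a = Z a - V a := rfl
    rw [e1, e2]
    linarith
  have hWmono : ∀ a b : ℝ, a ≤ b → W a ≤ W b := by
    intro a b hab
    have h0 : 0 ≤ ∫ s in a..b, (g s - f s) :=
      intervalIntegral.integral_nonneg_of_ae hab (by filter_upwards [hgf] with s hs; exact hs)
    linarith [hWsub a b]
  -- reflection formula
  have hWform : ∀ t : ℝ, 0 ≤ t → ∀ s0 ∈ Icc (0:ℝ) t, IsLeast (V '' Icc 0 t) (V s0) →
      W t = max (W 0) (-(V s0)) := by
    intro t ht s0 hs0 hls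
    have hlow : max (W 0) (-(V s0)) ≤ W t := by
      apply max_le (hWmono 0 t ht)
      have h1 : W s0 ≤ W t := hWmono s0 t hs0.2
      have e : W s0 = Z s0 - V s0 := rfl
      linarith [hZ0 s0]
    refine le_antisymm ?_ hlow
    by_contra hgt
    push_neg at hgt
    set M : ℝ := max (W 0) (-(V s0)) with hM
    set S : Set ℝ := Icc 0 t ∩ W ⁻¹' Iic M with hS
    have hSclosed : IsClosed S := isClosed_Icc.inter (isClosed_Iic.preimage hWcont)
    have hSne : S.Nonempty := by
      refine ⟨0, ⟨le_refl 0, ht⟩, ?_⟩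
      show W 0 ≤ M
      exact le_max_left _ _
    have hSbdd : BddAbove S := ⟨t, fun x hx => hx.1.2⟩
    set u : ℝ := sSup S with hu
    have huS : u ∈ S := hSclosed.csSup_mem hSne hSbdd
    have huM : W u ≤ M := huS.2
    have hut : u < t := by
      rcases lt_or_eq_of_le huS.1.2 with h' | h'
      · exact h'
      · rw [h'] at huM; exact absurd huM (not_le.2 hgt)
    have hu0 : 0 ≤ u := huS.1.1
    have hpos : ∀ s ∈ Ioc u t, 0 < Z s := by
      intro s hsuo
      have hWgt : M < W s := by
        by_contra hle
        push_neg at hle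
        have hsS : s ∈ S := ⟨⟨hu0.trans hsuo.1.le, hsuo.2⟩, hle⟩
        exact absurd (le_csSup hSbdd hsS) (not_le.2 hsuo.1)
      have hVs : V s0 ≤ V s := hls.2 (mem_image_of_mem _ ⟨hu0.trans hsuo.1.le, hsuo.2⟩)
      have e : W s = Z s - V s := rfl
      have hM2 : -(V s0) ≤ M := le_max_right _ _
      linarith
    have hzero : (∫ s in u..t, (g s - f s)) = 0 := by
      rw [intervalIntegral.integral_of_le hut.le]
      apply MeasureTheory.integral_eq_zero_of_ae
      filter_upwards [ae_restrict_mem measurableSet_Ioc, ae_restrict_of_ae hae'] with s hsm hs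
      show g s - f s = (0 : ℝ → ℝ) s
      rw [hs.1 (hpos s hsm)]
      simp
    have hWut := hWsub u t
    rw [hzero] at hWut
    have : W t ≤ M := by linarith
    exact absurd this (not_le.2 hgt)
  -- pick tstar
  obtain ⟨N, hN⟩ := exists_nat_ge (Z 0 / (-Δ))
  have hNΔ : (N : ℝ) * Δ ≤ -(Z 0) := by
    rw [div_le_iff₀ (neg_pos.2 hΔ)] at hN
    nlinarith
  refine ⟨((N : ℝ) + 1) * T, by positivity, ?_⟩
  intro t htt
  have hNn : (0:ℝ) ≤ (N:ℝ) := Nat.cast_nonneg N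
  have ht0 : 0 ≤ t := le_trans (by positivity) htt
  have hTt : T ≤ t := by nlinarith
  obtain ⟨s0, hs0, hls0⟩ := hmin 0 t ht0
  obtain ⟨s1, hs1, hls1⟩ := hmin (t - T) t (by linarith)
  have hAB : V s1 = V s0 := by
    apply le_antisymm
    · obtain ⟨s', hs'mem, hs'le⟩ := hshift s0 t hs0.1 hs0.2
      exact le_trans (hls1.2 (mem_image_of_mem _ hs'mem)) hs'le
    · exact hls0.2 (mem_image_of_mem _ ⟨by linarith [hs1.1], hs1.2⟩)
  have hNT : (N : ℝ) * T ∈ Icc (0:ℝ) t := ⟨by positivity, by nlinarith⟩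
  have hVNT : V ((N : ℝ) * T) = (N : ℝ) * Δ := by
    have := hVk N 0
    rw [hV0, zero_add] at this
    simpa using this
  have hZle : Z 0 ≤ -(V s0) := by
    have h1 : V s0 ≤ V ((N:ℝ) * T) := hls0.2 (mem_image_of_mem _ hNT)
    rw [hVNT] at h1
    linarith
  have hW0 : W 0 = Z 0 := by
    have e : W 0 = Z 0 - V 0 := rfl
    rw [hV0] at e
    linarith
  have hform := hWform t ht0 s0 hs0 hls0
  have hmaxeq : max (W 0) (-(V s0)) = -(V s0) := max_eq_right (by rw [hW0]; exact hZle)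
  rw [hmaxeq] at hform
  have eWt : W t = Z t - V t := rfl
  have eZb : Zb t = V t - sInf (V '' Icc (t - T) t) := rfl
  rw [hls1.csInf_eq] at eZb
  linarith
end

section
/- (Uniqueness of the periodic solution.) Let F ⊆ [0,1] be measurable, let 0 < p < c, let θ : ℝ → [0,1] be a position trajectory with period T > 0 and coverage time τ, and suppose c·τ > p·T. If Z₁ and Z₂ are accumulation functions for θ that are both T-periodic (Z_i(t+T) = Z_i(t) for all t, i = 1, 2), then Z₁(t) = Z₂(t) for all t. -/
open MeasureTheory Filter Set

/-- Locally integrable functions are interval integrable. -/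
lemma locInt_intervalInt {g : ℝ → ℝ} (hloc : MeasureTheory.LocallyIntegrable g
    MeasureTheory.volume) (a b : ℝ) : IntervalIntegrable g MeasureTheory.volume a b :=
  (hloc.integrableOn_isCompact isCompact_uIcc).intervalIntegrable

/-- A function whose increments are given by integrals of a locally integrable function
is continuous. -/
lemma cont_of_int (Z g : ℝ → ℝ) (hloc : MeasureTheory.LocallyIntegrable g
    MeasureTheory.volume)
    (hint : ∀ a b : ℝ, Z b - Z a = ∫ s in a..b, g s) : Continuous Z := by
  have h1 : Continuous fun t => ∫ s in (0:ℝ)..t, g s :=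
    intervalIntegral.continuous_primitive (fun a b => locInt_intervalInt hloc a b) 0
  have h2 : ∀ t, Z t = Z 0 + ∫ s in (0:ℝ)..t, g s := fun t => by
    have := hint 0 t; linarith
  exact (continuous_const.add h1).congr fun t => (h2 t).symm

/-- Key one-sided decrease lemma: if `D` is a primitive of `h`, `h ≤ 0` a.e. where `D > 0`,
and `D b > 0`, then `D` is positive at `a ≤ b` and `D b ≤ D a`. -/
lemma decreasing_step (D h : ℝ → ℝ)
    (hloc : MeasureTheory.LocallyIntegrable h MeasureTheory.volume)
    (hD : ∀ a b : ℝ, D b - D a = ∫ s in a..b, h s)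
    (hsign : ∀ᵐ t : ℝ, 0 < D t → h t ≤ 0)
    {a b : ℝ} (hab : a ≤ b) (hb : 0 < D b) : 0 < D a ∧ D b ≤ D a := by
  have hcont : Continuous D := cont_of_int D h hloc hD
  have step : ∀ s : ℝ, s ≤ b → (∀ t ∈ Set.Ioc s b, 0 < D t) → D b ≤ D s := by
    intro s hsb hpos
    have hle : D b - D s ≤ 0 := by
      rw [hD s b, intervalIntegral.integral_of_le hsb]
      apply MeasureTheory.integral_nonpos_of_ae
      have h1 : ∀ᵐ t ∂(MeasureTheory.volume.restrict (Set.Ioc s b)), 0 < D t → h t ≤ 0 :=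
        ae_restrict_of_ae hsign
      have h2 := MeasureTheory.ae_restrict_mem (μ := MeasureTheory.volume)
        (measurableSet_Ioc (a := s) (b := b))
      filter_upwards [h1, h2] with t ht hmem
      exact ht (hpos t hmem)
    linarith
  have hall : ∀ t ∈ Set.Icc a b, 0 < D t := by
    by_contra hno
    push_neg at hno
    obtain ⟨t₀, ht₀, ht₀le⟩ := hno
    set S : Set ℝ := Set.Icc a b ∩ D ⁻¹' Set.Iic 0 with hS
    have hSne : S.Nonempty := ⟨t₀, ht₀, ht₀le⟩
    have hSclosed : IsClosed S := isClosed_Icc.inter (isClosed_Iic.preimage hcont)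
    have hSbdd : BddAbove S := ⟨b, fun x hx => hx.1.2⟩
    have hsmem : sSup S ∈ S := hSclosed.csSup_mem hSne hSbdd
    set s := sSup S with hs
    have hs_le : s ≤ b := hsmem.1.2
    have hDs : D s ≤ 0 := hsmem.2
    have hpos : ∀ t ∈ Set.Ioc s b, 0 < D t := by
      intro t ht
      by_contra hle
      push_neg at hle
      have htS : t ∈ S := ⟨⟨le_trans hsmem.1.1 ht.1.le, ht.2⟩, hle⟩
      exact absurd (le_csSup hSbdd htS) (not_le.mpr ht.1)
    have := step s hs_le hpos
    linarith
  refine ⟨hall a ⟨le_refl a, hab⟩, step a hab fun t ht => hall t ⟨ht.1.le, ht.2⟩⟩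

/-- If an accumulation-type function is everywhere positive and `T`-periodic, the stability
condition yields a contradiction. -/
lemma accum_contra (F : Set ℝ) (p c : ℝ) (θ : ℝ → ℝ) (T τ : ℝ)
    (hT : 0 < T) (hstab : p * T < c * τ)
    (hθint : (∫ s in (0:ℝ)..(0 + T), F.indicator (fun _ => (1 : ℝ)) (θ s)) = τ)
    (Z g : ℝ → ℝ) (hloc : MeasureTheory.LocallyIntegrable g MeasureTheory.volume)
    (hint : ∀ a b : ℝ, Z b - Z a = ∫ s in a..b, g s)
    (hae : ∀ᵐ t : ℝ, 0 < Z t → g t = p - c * F.indicator (fun _ => (1 : ℝ)) (θ t))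
    (hpos : ∀ t : ℝ, 0 < Z t) (hper : Z (0 + T) = Z 0) : False := by
  set f : ℝ → ℝ := fun s => F.indicator (fun _ => (1 : ℝ)) (θ s) with hf
  have heq : (fun s => p - c * f s) =ᵐ[MeasureTheory.volume] g := by
    filter_upwards [hae] with t ht
    exact (ht (hpos t)).symm
  have hgint : IntervalIntegrable g MeasureTheory.volume 0 (0 + T) :=
    locInt_intervalInt hloc 0 (0 + T)
  have hfint : IntervalIntegrable (fun s => p - c * f s) MeasureTheory.volume 0 (0 + T) := by
    constructor
    · exact hgint.1.congr (ae_restrict_of_ae heq.symm)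
    · exact hgint.2.congr (ae_restrict_of_ae heq.symm)
  have h1 : (0 : ℝ) = ∫ s in (0:ℝ)..(0 + T), g s := by
    have := hint 0 (0 + T)
    rw [hper] at this
    linarith
  have h2 : (∫ s in (0:ℝ)..(0 + T), g s) = ∫ s in (0:ℝ)..(0 + T), (p - c * f s) := by
    apply intervalIntegral.integral_congr_ae
    filter_upwards [heq] with s hs _
    exact hs.symm
  have hcfint : IntervalIntegrable (fun s => c * f s) MeasureTheory.volume 0 (0 + T) := by
    have : (fun s => c * f s) = fun s => (p : ℝ) - (p - c * f s) := by
      funext s; ring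
    rw [this]
    exact intervalIntegrable_const.sub hfint
  have h3 : (∫ s in (0:ℝ)..(0 + T), (p - c * f s)) =
      (∫ s in (0:ℝ)..(0 + T), (p : ℝ)) - ∫ s in (0:ℝ)..(0 + T), c * f s := by
    rw [← intervalIntegral.integral_sub intervalIntegrable_const hcfint]
  have h4 : (∫ s in (0:ℝ)..(0 + T), c * f s) = c * τ := by
    rw [intervalIntegral.integral_const_mul, hθint]
  have h5 : (∫ s in (0:ℝ)..(0 + T), (p : ℝ)) = p * T := by
    simp [mul_comm]
  rw [h2, h3, h4, h5] at h1
  linarith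

/-- Uniqueness of the periodic solution: under the stability condition, any two
`T`-periodic accumulation functions coincide. -/
theorem periodic_solution_unique (F : Set ℝ) (hF : MeasurableSet F) (p c : ℝ)
    (hp : 0 < p) (hpc : p < c) (θ : ℝ → ℝ) (T τ : ℝ)
    (htraj : IsTrajectory F θ T τ) (hstab : p * T < c * τ)
    (Z₁ Z₂ : ℝ → ℝ)
    (hZ₁ : IsAccumulation F p c θ Z₁) (hZ₂ : IsAccumulation F p c θ Z₂)
    (hper₁ : ∀ t : ℝ, Z₁ (t + T) = Z₁ t) (hper₂ : ∀ t : ℝ, Z₂ (t + T) = Z₂ t) :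
    ∀ t : ℝ, Z₁ t = Z₂ t := by
  obtain ⟨hθmem, hT, hτ, hθper, hθint⟩ := htraj
  obtain ⟨hZ₁pos, g₁, hg₁loc, hg₁int, hg₁ae⟩ := hZ₁
  obtain ⟨hZ₂pos, g₂, hg₂loc, hg₂int, hg₂ae⟩ := hZ₂
  set D : ℝ → ℝ := fun t => Z₁ t - Z₂ t with hD
  set D' : ℝ → ℝ := fun t => Z₂ t - Z₁ t with hD'
  have hloc₁₂ : MeasureTheory.LocallyIntegrable (fun t => g₁ t - g₂ t)
      MeasureTheory.volume := hg₁loc.sub hg₂loc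
  have hloc₂₁ : MeasureTheory.LocallyIntegrable (fun t => g₂ t - g₁ t)
      MeasureTheory.volume := hg₂loc.sub hg₁loc
  have hDint : ∀ a b : ℝ, D b - D a = ∫ s in a..b, (g₁ s - g₂ s) := by
    intro a b
    rw [intervalIntegral.integral_sub (locInt_intervalInt hg₁loc a b)
      (locInt_intervalInt hg₂loc a b), ← hg₁int a b, ← hg₂int a b]
    simp only [hD]; ring
  have hD'int : ∀ a b : ℝ, D' b - D' a = ∫ s in a..b, (g₂ s - g₁ s) := by
    intro a b
    rw [intervalIntegral.integral_sub (locInt_intervalInt hg₂loc a b)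
      (locInt_intervalInt hg₁loc a b), ← hg₁int a b, ← hg₂int a b]
    simp only [hD']; ring
  have hsign₁ : ∀ᵐ t : ℝ, 0 < D t → g₁ t - g₂ t ≤ 0 := by
    filter_upwards [hg₁ae, hg₂ae] with t h1 h2 hlt
    have hZ₁t : 0 < Z₁ t := lt_of_le_of_lt (hZ₂pos t) (by simp only [hD] at hlt; linarith)
    rw [h1.1 hZ₁t]
    rcases eq_or_lt_of_le (hZ₂pos t) with h0 | h0
    · rw [h2.2 h0.symm]
      have := le_max_left (p - c * F.indicator (fun _ => (1:ℝ)) (θ t)) 0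
      linarith
    · rw [h2.1 h0]; ring_nf; exact le_refl _
  have hsign₂ : ∀ᵐ t : ℝ, 0 < D' t → g₂ t - g₁ t ≤ 0 := by
    filter_upwards [hg₁ae, hg₂ae] with t h1 h2 hlt
    have hZ₂t : 0 < Z₂ t := lt_of_le_of_lt (hZ₁pos t) (by simp only [hD'] at hlt; linarith)
    rw [h2.1 hZ₂t]
    rcases eq_or_lt_of_le (hZ₁pos t) with h0 | h0
    · rw [h1.2 h0.symm]
      have := le_max_left (p - c * F.indicator (fun _ => (1:ℝ)) (θ t)) 0
      linarith
    · rw [h1.1 h0]; ring_nf; exact le_refl _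
  -- |D| is antitone
  have habs : ∀ a b : ℝ, a ≤ b → |D b| ≤ |D a| := by
    intro a b hab
    rcases lt_trichotomy (D b) 0 with h | h | h
    · have hb' : 0 < D' b := by simp only [hD', hD] at *; linarith
      obtain ⟨ha', hba'⟩ := decreasing_step D' (fun t => g₂ t - g₁ t) hloc₂₁ hD'int hsign₂ hab hb'
      have haneg : D a < 0 := by simp only [hD', hD] at *; linarith
      rw [abs_of_neg h, abs_of_neg haneg]
      simp only [hD', hD] at *; linarith
    · rw [h, abs_zero]; exact abs_nonneg _
    · obtain ⟨ha', hba'⟩ := decreasing_step D (fun t => g₁ t - g₂ t) hloc₁₂ hDint hsign₁ hab h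
      rw [abs_of_pos h, abs_of_pos ha']
      exact hba'
  -- |D| is T-periodic
  have hWper : ∀ t : ℝ, |D (t + T)| = |D t| := by
    intro t; simp only [hD, hper₁ t, hper₂ t]
  have hWn : ∀ (s : ℝ) (n : ℕ), |D (s + n * T)| = |D s| := by
    intro s n
    induction n with
    | zero => simp
    | succ n ih =>
      have : s + (n + 1 : ℕ) * T = (s + n * T) + T := by push_cast; ring
      rw [this, hWper, ih]
  -- |D| is constant
  have hWconst : ∀ t : ℝ, |D t| = |D 0| := by
    have key : ∀ s t : ℝ, s ≤ t → |D t| = |D s| := by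
      intro s t hst
      refine le_antisymm (habs s t hst) ?_
      obtain ⟨n, hn⟩ := exists_nat_ge ((t - s) / T)
      have hn' : t ≤ s + n * T := by
        have := (div_le_iff₀ hT).mp hn
        linarith
      calc |D s| = |D (s + n * T)| := (hWn s n).symm
        _ ≤ |D t| := habs t (s + n * T) hn'
    intro t
    rcases le_total t 0 with h | h
    · exact (key t 0 h).symm
    · exact key 0 t h
  rcases eq_or_lt_of_le (abs_nonneg (D 0)) with hw | hw
  · -- |D 0| = 0 : done
    intro t
    have : |D t| = 0 := by rw [hWconst t, ← hw]
    have : D t = 0 := abs_eq_zero.mp this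
    simp only [hD] at this; linarith
  · -- |D 0| > 0 : contradiction
    exfalso
    have hne : ∀ t : ℝ, D t ≠ 0 := by
      intro t h
      have h2 := hWconst t
      rw [abs_eq_zero.mpr h] at h2
      linarith
    have hcontD : Continuous D :=
      (cont_of_int Z₁ g₁ hg₁loc hg₁int).sub (cont_of_int Z₂ g₂ hg₂loc hg₂int)
    rcases lt_or_gt_of_ne (hne 0) with h0 | h0
    · -- D < 0 everywhere, i.e. Z₂ > Z₁ ≥ 0 everywhere
      have hposD : ∀ t : ℝ, D t < 0 := by
        intro t
        rcases lt_or_gt_of_ne (hne t) with h | h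
        · exact h
        · exfalso
          have : (0:ℝ) ∈ Set.uIcc (D t) (D 0) := Set.mem_uIcc.mpr (Or.inr ⟨h0.le, h.le⟩)
          obtain ⟨x, _, hx⟩ := intermediate_value_uIcc hcontD.continuousOn this
          exact hne x hx
      have hZ₂p : ∀ t : ℝ, 0 < Z₂ t := by
        intro t
        have := hposD t
        simp only [hD] at this
        have := hZ₁pos t
        linarith
      exact accum_contra F p c θ T τ hT hstab (hθint 0) Z₂ g₂ hg₂loc hg₂int
        (by filter_upwards [hg₂ae] with t ht; exact ht.1) hZ₂p (hper₂ 0)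
    · -- D > 0 everywhere
      have hposD : ∀ t : ℝ, 0 < D t := by
        intro t
        rcases lt_or_gt_of_ne (hne t) with h | h
        · exfalso
          have : (0:ℝ) ∈ Set.uIcc (D t) (D 0) := Set.mem_uIcc.mpr (Or.inl ⟨h.le, h0.le⟩)
          obtain ⟨x, _, hx⟩ := intermediate_value_uIcc hcontD.continuousOn this
          exact hne x hx
        · exact h
      have hZ₁p : ∀ t : ℝ, 0 < Z₁ t := by
        intro t
        have := hposD t
        simp only [hD] at this
        have := hZ₂pos t
        linarith
      exact accum_contra F p c θ T τ hT hstab (hθint 0) Z₁ g₁ hg₁loc hg₁int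
        (by filter_upwards [hg₁ae] with t ht; exact ht.1) hZ₁p (hper₁ 0)
end

section
/- (Discrete form of the Steady-State Field at Points y_k Lemma.) Let ℓ ≥ 1 and let a : ℤ/ℓℤ → ℝ. Suppose z : ℤ/ℓℤ → ℝ satisfies the cyclic recursion z_k = max(z_{k−1} + a_k, 0) for every k, and z_j = 0 for some index j. Then for every k, z_k = max_{b ∈ {0,…,ℓ−1}} N_{k−b,k}, where N_{k,k} := 0 and, for b ≥ 1, N_{k−b,k} := Σ_{w=0}^{b−1} a_{k−w} (indices taken modulo ℓ). -/
/-!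
Unrolling `z k = max (z (k - 1) + a k) 0` backwards from `k` gives `z k ≥ z (k - b) + N_{k-b,k}`
for every `b`, hence `z k ≥ N_{k-b,k}` since `z ≥ 0`; and the unrolling stops, with `z k` equal
to one of the `N_{k-b,k}`, at the first index `k - b` where the `max` is attained by `0`.
By periodicity such a zero of `z` occurs within `ℓ` steps back from `k`.
-/

open Finset

namespace SteadyState

theorem nonneg_of_rec {a z : ℤ → ℝ} (hrec : ∀ k, z k = max (z (k - 1) + a k) 0) (k : ℤ) :
    0 ≤ z k :=
  hrec k ▸ le_max_right _ _

theorem add_sum_le_of_rec {a z : ℤ → ℝ} (hrec : ∀ k, z k = max (z (k - 1) + a k) 0)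
    (b : ℕ) (k : ℤ) : z (k - b) + ∑ w ∈ range b, a (k - w) ≤ z k := by
  induction b generalizing k with
  | zero => simp
  | succ b ih =>
    have hstep : z (k - 1) + a k ≤ z k := hrec k ▸ le_max_left _ _
    calc z (k - ↑(b + 1)) + ∑ w ∈ range (b + 1), a (k - w)
        = z (k - 1 - b) + ∑ w ∈ range b, a (k - 1 - w) + a k := by
          rw [sum_range_succ']; push_cast; ring_nf
      _ ≤ z (k - 1) + a k := by gcongr; exact ih (k - 1)
      _ ≤ z k := hstep

theorem sum_le_of_rec {a z : ℤ → ℝ} (hrec : ∀ k, z k = max (z (k - 1) + a k) 0)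
    (b : ℕ) (k : ℤ) : ∑ w ∈ range b, a (k - w) ≤ z k :=
  (le_add_of_nonneg_left (nonneg_of_rec hrec _)).trans (add_sum_le_of_rec hrec b k)

theorem exists_eq_sum_of_rec_of_eq_zero {a z : ℤ → ℝ}
    (hrec : ∀ k, z k = max (z (k - 1) + a k) 0) {b : ℕ} {k : ℤ} (hzero : z (k - b) = 0) :
    ∃ c ≤ b, z k = ∑ w ∈ range c, a (k - w) := by
  induction b generalizing k with
  | zero => exact ⟨0, le_rfl, by simpa using hzero⟩
  | succ b ih =>
    rcases max_cases (z (k - 1) + a k) 0 with ⟨hmax, -⟩ | ⟨hmax, -⟩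
    · obtain ⟨c, hcb, hc⟩ := ih (k := k - 1) (by rw [← hzero]; push_cast; ring_nf)
      refine ⟨c + 1, by omega, ?_⟩
      rw [hrec k, hmax, hc, sum_range_succ']
      push_cast; ring_nf
    · exact ⟨0, by omega, by rw [hrec k, hmax, sum_range_zero]⟩

theorem exists_lt_eq_zero_of_periodic {z : ℤ → ℝ} {ℓ : ℕ} (hℓ : 0 < ℓ)
    (hz : Function.Periodic z ℓ) (hzero : ∃ j, z j = 0) (k : ℤ) :
    ∃ b < ℓ, z (k - b) = 0 := by
  obtain ⟨j, hj⟩ := hzero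
  have hshift : Function.Periodic (fun m => z (k - m)) ℓ := fun m => by
    simpa [sub_add_eq_sub_sub] using (hz (k - m - ℓ)).symm
  obtain ⟨m, ⟨hm0, hmℓ⟩, hm⟩ := hshift.exists_mem_Ico₀ (by exact_mod_cast hℓ) (k - j)
  refine ⟨m.toNat, by omega, ?_⟩
  simpa [Int.toNat_of_nonneg hm0, hj] using hm.symm

end SteadyState

open SteadyState in
/-- Discrete form of the steady-state field lemma at the exit points `y_k`:
if `z` is an `ℓ`-periodic (cyclic) sequence satisfying `z_k = max (z_{k−1} + a_k) 0`
with `a` also `ℓ`-periodic, and `z` vanishes at some index, then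
`z_k = max_{b ∈ {0,…,ℓ−1}} N_{k−b,k}` where `N_{k−b,k} = Σ_{w=0}^{b−1} a_{k−w}`. -/
theorem steady_state_at_exit_points (ℓ : ℕ) (hℓ : 1 ≤ ℓ) (a z : ℤ → ℝ)
    (hz : ∀ k : ℤ, z (k + (ℓ : ℤ)) = z k)
    (hrec : ∀ k : ℤ, z k = max (z (k - 1) + a k) 0)
    (hzero : ∃ j : ℤ, z j = 0) :
    ∀ k : ℤ, z k = (Finset.range ℓ).sup'
      (Finset.nonempty_range_iff.mpr (by omega))
      (fun b => ∑ w ∈ Finset.range b, a (k - (w : ℤ))) := by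
  intro k
  obtain ⟨b, hbℓ, hb⟩ := exists_lt_eq_zero_of_periodic hℓ hz hzero k
  obtain ⟨c, hcb, hc⟩ := exists_eq_sum_of_rec_of_eq_zero hrec hb
  refine le_antisymm ?_ (sup'_le _ _ fun b _ => sum_le_of_rec hrec b k)
  rw [hc]
  exact le_sup' (fun b => ∑ w ∈ range b, a (k - w)) (mem_range.mpr (by omega))
end

section
/- (Steady-State Upper Bound Lemma.) Let 0 < p < c, let T > 0, let ℓ ≥ 1, and let (s_k)_{k∈ℤ} and (e_k)_{k∈ℤ} be real sequences with s_k < e_k < s_{k+1} for all k and s_{k+ℓ} = s_k + T, e_{k+ℓ} = e_k + T for all k (the entry and exit times into the covered set within each period). Let θ : ℝ → [0,1] be a position trajectory with period T and coverage time τ = Σ_{k=1}^ℓ (e_k − s_k) such that {t ∈ ℝ : θ(t) ∈ F} = ⋃_{k∈ℤ} [s_k, e_k], and suppose c·τ > p·T. Then every accumulation function Z for θ satisfies limsup_{t→∞} Z(t) = max over k ∈ {1,…,ℓ} and b ∈ {0,…,ℓ−1} of X_{k,b}, where X_{k,b} := p·(s_{k+1} − e_{k−b}) − c·Σ_{w=0}^{b−1}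 (e_{k−w} − s_{k−w}). -/
open MeasureTheory Filter Set

/-!
Write `W k = Z (e k)` for the value at the `k`-th exit time. Over the coverage interval
`[s k, e k]` the accumulation decreases at rate `c - p` until it hits `0`, and over the gap
`[e k, s (k + 1)]` it grows at rate `p`, so `W` obeys the Lindley recursion
`W k = max 0 (W (k - 1) + d k)` with an `ℓ`-periodic increment `d` whose sum over a period is
`p T - c τ < 0`. Unrolling it, `W k` dominates every backward partial sum `d k + ⋯ + d (k - b + 1)`
and, once the initial value has been used up, equals one of them; a sum over `b ≥ ℓ` terms is
beaten by the one over `b % ℓ` terms. Adding the growth over the next gap turns these sums into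
the `X_{k,b}`, so eventually `Z (s (k + 1)) = max_{b < ℓ} X_{k,b}`, which is `ℓ`-periodic in `k`.
Since `Z` decreases and then increases between consecutive entry times, its limsup is the
largest of these values.
-/

def backwardSum (d : ℤ → ℝ) (k : ℤ) (b : ℕ) : ℝ :=
  ∑ w ∈ Finset.range b, d (k - w)

section BackwardSum

variable {d : ℤ → ℝ} {ℓ : ℕ}

@[simp]
lemma backwardSum_zero (d : ℤ → ℝ) (k : ℤ) : backwardSum d k 0 = 0 := by
  simp [backwardSum]

lemma backwardSum_succ (d : ℤ → ℝ) (k : ℤ) (b : ℕ) :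
    backwardSum d k (b + 1) = backwardSum d k b + d (k - b) :=
  Finset.sum_range_succ _ _

lemma backwardSum_add (d : ℤ → ℝ) (k : ℤ) (b n : ℕ) :
    backwardSum d k (b + n) = backwardSum d k b + backwardSum d (k - b) n := by
  simp only [backwardSum, Finset.sum_range_add, Nat.cast_add, sub_add_eq_sub_sub]

lemma backwardSum_succ' (d : ℤ → ℝ) (k : ℤ) (b : ℕ) :
    backwardSum d k (b + 1) = d k + backwardSum d (k - 1) b := by
  rw [add_comm, backwardSum_add]
  simp [backwardSum]

lemma backwardSum_period (hd : Function.Periodic d ℓ) (k : ℤ) :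
    backwardSum d k ℓ = ∑ j ∈ Finset.Icc (1 : ℤ) ℓ, d j := by
  have hshift : Function.Periodic (fun k => backwardSum d k ℓ) 1 := fun k => by
    have h₁ := backwardSum_succ d (k + 1) ℓ
    have h₂ := backwardSum_succ' d (k + 1) ℓ
    have hd' : d (k + 1 - ℓ) = d (k + 1) := by simpa using (hd (k + 1 - ℓ)).symm
    rw [add_sub_cancel_right] at h₂
    linarith
  have hconst : ∀ k, backwardSum d k ℓ = backwardSum d 0 ℓ := fun k => by
    simpa using hshift.int_mul k 0
  rw [hconst, ← hconst ℓ]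
  refine Finset.sum_nbij' (fun w => (ℓ : ℤ) - w) (fun j => (ℓ - j).toNat) ?_ ?_ ?_ ?_ ?_ <;>
    intro x hx <;> simp_all <;> omega

lemma backwardSum_add_mul_period (hd : Function.Periodic d ℓ) (k : ℤ) (r q : ℕ) :
    backwardSum d k (r + q * ℓ) = backwardSum d k r + q * ∑ j ∈ Finset.Icc (1 : ℤ) ℓ, d j := by
  induction q with
  | zero => simp
  | succ q ih =>
    rw [Nat.succ_mul, ← add_assoc, backwardSum_add, ih, backwardSum_period hd]
    push_cast
    ring

lemma backwardSum_le_mod_period (hd : Function.Periodic d ℓ)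
    (hneg : ∑ j ∈ Finset.Icc (1 : ℤ) ℓ, d j ≤ 0) (k : ℤ) (b : ℕ) :
    backwardSum d k b ≤ backwardSum d k (b % ℓ) := by
  conv_lhs => rw [← Nat.mod_add_div' b ℓ]
  rw [backwardSum_add_mul_period hd]
  linarith [mul_nonpos_of_nonneg_of_nonpos (Nat.cast_nonneg (α := ℝ) (b / ℓ)) hneg]

end BackwardSum

section Lindley

variable {W d : ℤ → ℝ} (hW : ∀ k, W k = max 0 (W (k - 1) + d k))
include hW

lemma lindley_nonneg (k : ℤ) : 0 ≤ W k :=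
  (hW k).symm ▸ le_max_left _ _

lemma lindley_add_backwardSum_le (k : ℤ) (b : ℕ) : W (k - b) + backwardSum d k b ≤ W k := by
  induction b with
  | zero => simp
  | succ b ih =>
    have hstep := (hW (k - b)).symm ▸ le_max_right 0 (W (k - b - 1) + d (k - b))
    rw [backwardSum_succ]
    push_cast
    rw [← sub_sub]
    linarith

lemma lindley_eq_backwardSum_or (k : ℤ) (n : ℕ) :
    (∃ b, W k = backwardSum d k b) ∨ W k = W (k - n) + backwardSum d k n := by
  induction n with
  | zero => simp
  | succ n ih =>
    refine ih.elim Or.inl fun h => ?_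
    rcases le_total (W (k - n - 1) + d (k - n)) 0 with hle | hge
    · left
      refine ⟨n, ?_⟩
      rw [h, hW (k - n), max_eq_left hle, zero_add]
    · right
      rw [h, hW (k - n), max_eq_right hge, backwardSum_succ]
      push_cast
      rw [← sub_sub]
      ring

lemma lindley_eventually_attained {ℓ : ℕ} (hℓ : 0 < ℓ) (hd : Function.Periodic d ℓ)
    (hneg : ∑ j ∈ Finset.Icc (1 : ℤ) ℓ, d j < 0) :
    ∀ᶠ k in atTop, ∃ b < ℓ, W k = backwardSum d k b := by
  set Δ := ∑ j ∈ Finset.Icc (1 : ℤ) ℓ, d j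
  obtain ⟨q₀, hq₀⟩ : ∃ q₀ : ℕ, W 0 + q₀ * Δ ≤ 0 := by
    obtain ⟨q₀, hq₀⟩ := exists_nat_ge (W 0 / -Δ)
    refine ⟨q₀, ?_⟩
    rw [div_le_iff₀ (neg_pos.2 hneg)] at hq₀
    linarith
  filter_upwards [eventually_ge_atTop ((q₀ * ℓ : ℕ) : ℤ)] with k hk
  -- Unroll down to the fixed index `0`: after `q₀` full periods, `W 0` is used up.
  suffices ∃ b, W k ≤ backwardSum d k b by
    obtain ⟨b, hb⟩ := this
    refine ⟨b % ℓ, Nat.mod_lt b hℓ,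
      le_antisymm (hb.trans (backwardSum_le_mod_period hd hneg.le k b)) ?_⟩
    linarith [lindley_add_backwardSum_le hW k (b % ℓ), lindley_nonneg hW (k - (b % ℓ : ℕ))]
  rcases lindley_eq_backwardSum_or hW k k.toNat with ⟨b, hb⟩ | h
  · exact ⟨b, hb.le⟩
  · refine ⟨k.toNat % ℓ, ?_⟩
    have hq : q₀ ≤ k.toNat / ℓ := (Nat.le_div_iff_mul_le hℓ).2 (by omega)
    have hqΔ : ((k.toNat / ℓ : ℕ) : ℝ) * Δ ≤ q₀ * Δ :=
      mul_le_mul_of_nonpos_right (by exact_mod_cast hq) hneg.le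
    rw [h, ← Nat.mod_add_div' k.toNat ℓ, backwardSum_add_mul_period hd, Nat.mod_add_div',
      show k - (k.toNat : ℤ) = 0 by omega]
    linarith

end Lindley

section IntervalBounds

variable {g : ℝ → ℝ} {a b C : ℝ}

lemma ae_restrict_Icc_of_ae_Ioo {P : ℝ → Prop} (h : ∀ᵐ t, t ∈ Ioo a b → P t) :
    ∀ᵐ t ∂volume.restrict (Icc a b), P t := by
  rw [← Measure.restrict_congr_set Ioo_ae_eq_Icc]
  exact (ae_restrict_iff' measurableSet_Ioo).2 h

lemma integral_le_mul_sub_of_ae_le (hab : a ≤ b) (hg : IntervalIntegrable g volume a b)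
    (h : ∀ᵐ t, t ∈ Ioo a b → g t ≤ C) : ∫ t in a..b, g t ≤ C * (b - a) := by
  have := intervalIntegral.integral_mono_ae_restrict hab hg intervalIntegrable_const
    (ae_restrict_Icc_of_ae_Ioo h)
  simpa [mul_comm] using this

lemma mul_sub_le_integral_of_ae_le (hab : a ≤ b) (hg : IntervalIntegrable g volume a b)
    (h : ∀ᵐ t, t ∈ Ioo a b → C ≤ g t) : C * (b - a) ≤ ∫ t in a..b, g t := by
  have := intervalIntegral.integral_mono_ae_restrict hab intervalIntegrable_const hg
    (ae_restrict_Icc_of_ae_Ioo h)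
  simpa [mul_comm] using this

end IntervalBounds

lemma limsup_eq_of_eventually_le_of_frequently_le {α : Type*} {l : Filter α} {f : α → ℝ}
    {M : ℝ} (hle : ∀ᶠ x in l, f x ≤ M) (hge : ∃ᶠ x in l, M ≤ f x) : limsup f l = M := by
  have hcob : IsCoboundedUnder (· ≤ ·) l f :=
    ⟨M, fun a ha => let ⟨_, hx, hxa⟩ := (hge.and_eventually ha).exists; hx.trans hxa⟩
  exact le_antisymm (limsup_le_of_le hcob hle)
    (le_limsup_of_frequently_le hge (isBoundedUnder_of_eventually_le hle))

lemma Function.Periodic.frequently_atTop_eq {α : Type*} {f : ℤ → α} {c : ℤ}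
    (hf : Function.Periodic f c) (hc : 0 < c) (k₀ : ℤ) : ∃ᶠ k in atTop, f k = f k₀ :=
  frequently_atTop.2 fun a =>
    ⟨k₀ + (a - k₀).toNat * c, by nlinarith [Int.self_le_toNat (a - k₀)], hf.nat_mul _ k₀⟩

section AddPeriodic

variable {s : ℤ → ℝ} {T : ℝ} {ℓ : ℕ}

lemma add_nat_mul_eq_of_add_eq (hs : ∀ k, s (k + ℓ) = s k + T) (k : ℤ) (n : ℕ) :
    s (k + n * ℓ) = s k + n * T := by
  induction n with
  | zero => simp
  | succ n ih =>
    rw [Nat.cast_succ, add_one_mul, ← add_assoc, hs, ih]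
    push_cast
    ring

lemma tendsto_atTop_of_add_eq (hmono : Monotone s) (hT : 0 < T)
    (hs : ∀ k, s (k + ℓ) = s k + T) : Tendsto s atTop atTop := by
  refine hmono.tendsto_atTop_atTop fun x => ?_
  obtain ⟨n, hn⟩ := exists_nat_ge ((x - s 0) / T)
  refine ⟨n * ℓ, ?_⟩
  rw [← zero_add ((n : ℤ) * ℓ), add_nat_mul_eq_of_add_eq hs]
  rw [div_le_iff₀ hT] at hn
  linarith

lemma exists_mem_Ico_of_tendsto (hmono : Monotone s) (hs : Tendsto s atTop atTop)
    {k₀ : ℤ} {t : ℝ} (ht : s k₀ ≤ t) : ∃ k ≥ k₀, t ∈ Ico (s k) (s (k + 1)) := by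
  obtain ⟨K, hK⟩ := (tendsto_atTop.1 hs (t + 1)).exists_forall_of_atTop
  have hbdd : ∀ k, s k ≤ t → k ≤ K := fun k hk => by
    by_contra! hlt
    linarith [hK K le_rfl, hmono hlt.le]
  obtain ⟨k, hk, hmax⟩ := Int.exists_greatest_of_bdd ⟨K, hbdd⟩ ⟨k₀, ht⟩
  refine ⟨k, hmax k₀ ht, hk, lt_of_not_ge fun h => ?_⟩
  linarith [hmax (k + 1) h]

end AddPeriodic

/-- The change of `Z` from the `(k-1)`-st to the `k`-th exit time when `Z` stays positive. -/
def cycleIncrement (p c : ℝ) (s e : ℤ → ℝ) (k : ℤ) : ℝ :=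
  p * (e k - e (k - 1)) - c * (e k - s k)

/-- The paper's `X_{k,b}`. -/
def steadyPeak (p c : ℝ) (s e : ℤ → ℝ) (k : ℤ) (b : ℕ) : ℝ :=
  p * (s (k + 1) - e (k - b)) - c * ∑ w ∈ Finset.range b, (e (k - w) - s (k - w))

section CycleIncrement

variable {p c T : ℝ} {ℓ : ℕ} {s e : ℤ → ℝ}

lemma backwardSum_cycleIncrement (k : ℤ) (b : ℕ) :
    backwardSum (cycleIncrement p c s e) k b =
      p * (e k - e (k - b)) - c * backwardSum (fun j => e j - s j) k b := by
  induction b with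
  | zero => simp
  | succ b ih =>
    simp only [backwardSum_succ, ih, cycleIncrement]
    push_cast
    rw [← sub_sub]
    ring

lemma steadyPeak_eq (k : ℤ) (b : ℕ) :
    steadyPeak p c s e k b = p * (s (k + 1) - e k) + backwardSum (cycleIncrement p c s e) k b := by
  rw [backwardSum_cycleIncrement, steadyPeak, backwardSum]
  ring

variable (hsper : ∀ k, s (k + ℓ) = s k + T) (heper : ∀ k, e (k + ℓ) = e k + T)
include hsper heper

lemma periodic_cycleIncrement : Function.Periodic (cycleIncrement p c s e) ℓ := fun k => by
  simp only [cycleIncrement, hsper, heper, add_sub_right_comm k (ℓ : ℤ) 1]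
  ring

lemma periodic_steadyPeak (b : ℕ) : Function.Periodic (steadyPeak p c s e · b) ℓ := fun k => by
  simp only [steadyPeak, add_right_comm k (ℓ : ℤ), add_sub_right_comm k (ℓ : ℤ), hsper, heper,
    add_sub_add_right_eq_sub]

lemma sum_Icc_cycleIncrement :
    ∑ j ∈ Finset.Icc (1 : ℤ) ℓ, cycleIncrement p c s e j =
      p * T - c * ∑ j ∈ Finset.Icc (1 : ℤ) ℓ, (e j - s j) := by
  have hes : Function.Periodic (fun j => e j - s j) ℓ := fun j => by simp only [hsper, heper]; ring
  rw [← backwardSum_period (periodic_cycleIncrement hsper heper) ℓ,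
    ← backwardSum_period hes ℓ, backwardSum_cycleIncrement, sub_self, ← zero_add (ℓ : ℤ), heper]
  ring

end CycleIncrement

namespace IsAccumulation

variable {F : Set ℝ} {p c : ℝ} {θ Z : ℝ → ℝ} {a b : ℝ}

lemma exists_rate (hZ : IsAccumulation F p c θ Z) :
    ∃ g : ℝ → ℝ, (∀ a b, IntervalIntegrable g volume a b) ∧
      (∀ a b, Z b - Z a = ∫ s in a..b, g s) ∧
      ∀ᵐ t, p - c * F.indicator 1 (θ t) ≤ g t ∧ g t ≤ max (p - c * F.indicator 1 (θ t)) 0 ∧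
        (0 < Z t → g t = p - c * F.indicator 1 (θ t)) := by
  obtain ⟨hZ0, g, hg, hint, hae⟩ := hZ
  refine ⟨g, fun a b => (hg.integrableOn_isCompact isCompact_uIcc).intervalIntegrable, hint, ?_⟩
  filter_upwards [hae] with t hrt
  obtain ⟨hpos, hzero⟩ := hrt
  rcases (hZ0 t).eq_or_lt with h | h
  · rw [hzero h.symm]
    exact ⟨le_max_left _ _, le_rfl, fun h' => absurd h (ne_of_lt h')⟩
  · rw [hpos h]
    exact ⟨le_rfl, le_max_left _ _, fun _ => rfl⟩

variable (hZ : IsAccumulation F p c θ Z)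
include hZ

lemma eq_add_of_uncovered (hp : 0 ≤ p) (hab : a ≤ b) (h : ∀ t ∈ Ioo a b, θ t ∉ F) :
    Z b = Z a + p * (b - a) := by
  obtain ⟨g, hg, hint, hr⟩ := hZ.exists_rate
  have hrate : ∀ᵐ t, t ∈ Ioo a b → g t = p := by
    filter_upwards [hr] with t hrt ht
    obtain ⟨hlo, hhi, -⟩ := hrt
    simp only [indicator_of_notMem (h t ht), mul_zero, sub_zero, max_eq_left hp] at hlo hhi
    exact le_antisymm hhi hlo
  have hle := integral_le_mul_sub_of_ae_le hab (hg a b) (hrate.mono fun t ht hmem => (ht hmem).le)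
  have hge := mul_sub_le_integral_of_ae_le hab (hg a b) (hrate.mono fun t ht hmem => (ht hmem).ge)
  linarith [hint a b]

lemma le_of_covered (hpc : p ≤ c) (hab : a ≤ b) (h : ∀ t ∈ Ioo a b, θ t ∈ F) : Z b ≤ Z a := by
  obtain ⟨g, hg, hint, hr⟩ := hZ.exists_rate
  have hrate : ∀ᵐ t, t ∈ Ioo a b → g t ≤ 0 := by
    filter_upwards [hr] with t hrt ht
    obtain ⟨-, hhi, -⟩ := hrt
    simpa only [indicator_of_mem (h t ht), Pi.one_apply, mul_one,
      max_eq_right (sub_nonpos.2 hpc)] using hhi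
  linarith [integral_le_mul_sub_of_ae_le hab (hg a b) hrate, hint a b]

lemma eq_max_of_covered (hpc : p ≤ c) (hab : a ≤ b) (h : ∀ t ∈ Ioo a b, θ t ∈ F) :
    Z b = max 0 (Z a + (p - c) * (b - a)) := by
  obtain ⟨g, hg, hint, hr⟩ := hZ.exists_rate
  have hlo : ∀ᵐ t, t ∈ Ioo a b → p - c ≤ g t := by
    filter_upwards [hr] with t hrt ht
    obtain ⟨hlo, -, -⟩ := hrt
    simpa only [indicator_of_mem (h t ht), Pi.one_apply, mul_one] using hlo
  have hZb := mul_sub_le_integral_of_ae_le hab (hg a b) hlo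
  rcases (hZ.1 b).eq_or_lt with hzero | hpos
  · rw [← hzero, max_eq_left (by linarith [hint a b])]
  -- `Z` is antitone on the covered interval, so it stays positive up to `b`.
  have hhi : ∀ᵐ t, t ∈ Ioo a b → g t ≤ p - c := by
    filter_upwards [hr] with t hrt ht
    obtain ⟨-, -, heq⟩ := hrt
    have hZt : 0 < Z t := hpos.trans_le <|
      hZ.le_of_covered hpc ht.2.le fun u hu => h u ⟨ht.1.trans hu.1, hu.2⟩
    simp only [heq hZt, indicator_of_mem (h t ht), Pi.one_apply, mul_one, le_refl]
  have := integral_le_mul_sub_of_ae_le hab (hg a b) hhi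
  rw [max_eq_right] <;> linarith [hint a b]

end IsAccumulation

section Coverage

variable {F : Set ℝ} {θ : ℝ → ℝ} {s e : ℤ → ℝ}
  (hse : ∀ k, s k < e k ∧ e k < s (k + 1)) (hcov : {t | θ t ∈ F} = ⋃ k, Icc (s k) (e k))

include hse in
lemma strictMono_entry : StrictMono s :=
  strictMono_int_of_lt_succ fun k => (hse k).1.trans (hse k).2

include hse in
lemma strictMono_exit : StrictMono e :=
  strictMono_int_of_lt_succ fun k => (hse k).2.trans (hse (k + 1)).1

include hcov in
lemma mem_of_mem_Icc {k : ℤ} {t : ℝ} (ht : t ∈ Icc (s k) (e k)) : θ t ∈ F :=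
  show t ∈ {t | θ t ∈ F} from hcov ▸ mem_iUnion.2 ⟨k, ht⟩

include hse hcov in
lemma notMem_of_mem_Ioo {k : ℤ} {t : ℝ} (ht : t ∈ Ioo (e k) (s (k + 1))) : θ t ∉ F := by
  intro hθ
  obtain ⟨j, hj⟩ := mem_iUnion.1 (show t ∈ ⋃ k, Icc (s k) (e k) from hcov ▸ hθ)
  rcases le_or_gt j k with hjk | hkj
  · exact (hj.2.trans ((strictMono_exit hse).monotone hjk)).not_gt ht.1
  · exact (((strictMono_entry hse).monotone hkj).trans hj.1).not_gt ht.2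

namespace IsAccumulation

variable {p c : ℝ} {Z : ℝ → ℝ} (hZ : IsAccumulation F p c θ Z)
include hZ hse hcov

lemma entry_eq (hp : 0 ≤ p) (k : ℤ) : Z (s (k + 1)) = Z (e k) + p * (s (k + 1) - e k) :=
  hZ.eq_add_of_uncovered hp (hse k).2.le fun _ ht => notMem_of_mem_Ioo hse hcov ht

lemma exit_eq_lindley (hp : 0 ≤ p) (hpc : p ≤ c) (k : ℤ) :
    Z (e k) = max 0 (Z (e (k - 1)) + cycleIncrement p c s e k) := by
  have hcovered := hZ.eq_max_of_covered hpc (hse k).1.le fun _ ht =>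
    mem_of_mem_Icc hcov (Ioo_subset_Icc_self ht)
  have hentry := hZ.entry_eq hse hcov hp (k - 1)
  rw [sub_add_cancel] at hentry
  rw [hcovered, hentry, cycleIncrement]
  ring_nf

lemma le_max_entry (hp : 0 ≤ p) (hpc : p ≤ c) {k : ℤ} {t : ℝ}
    (ht : t ∈ Icc (s k) (s (k + 1))) :
    Z t ≤ max (Z (s k)) (Z (s (k + 1))) := by
  rcases le_total t (e k) with hte | het
  · exact le_max_of_le_left <| hZ.le_of_covered hpc ht.1 fun _ hu =>
      mem_of_mem_Icc hcov ⟨hu.1.le, hu.2.le.trans hte⟩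
  · have := hZ.eq_add_of_uncovered hp ht.2 fun _ hu =>
      notMem_of_mem_Ioo hse hcov ⟨het.trans_lt hu.1, hu.2⟩
    exact le_max_of_le_right (by linarith [mul_nonneg hp (sub_nonneg.2 ht.2)])

lemma steadyPeak_le_entry (hp : 0 ≤ p) (hpc : p ≤ c) (k : ℤ) (b : ℕ) :
    steadyPeak p c s e k b ≤ Z (s (k + 1)) := by
  have hW := hZ.exit_eq_lindley hse hcov hp hpc
  rw [steadyPeak_eq, hZ.entry_eq hse hcov hp]
  linarith [lindley_add_backwardSum_le hW k b, lindley_nonneg hW (k - b)]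

lemma eventually_entry_eq_steadyPeak (hp : 0 ≤ p) (hpc : p ≤ c) {T : ℝ} {ℓ : ℕ} (hℓ : 0 < ℓ)
    (hsper : ∀ k, s (k + ℓ) = s k + T) (heper : ∀ k, e (k + ℓ) = e k + T)
    (hstab : p * T < c * ∑ k ∈ Finset.Icc (1 : ℤ) ℓ, (e k - s k)) :
    ∀ᶠ k in atTop, ∃ b < ℓ, Z (s (k + 1)) = steadyPeak p c s e k b := by
  have hneg : ∑ j ∈ Finset.Icc (1 : ℤ) ℓ, cycleIncrement p c s e j < 0 := by
    rw [sum_Icc_cycleIncrement hsper heper]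
    linarith
  filter_upwards [lindley_eventually_attained (hZ.exit_eq_lindley hse hcov hp hpc) hℓ
    (periodic_cycleIncrement hsper heper) hneg] with k ⟨b, hb, hW⟩
  exact ⟨b, hb, by rw [hZ.entry_eq hse hcov hp, hW, steadyPeak_eq]; ring⟩

lemma eventually_le_of_eventually_entry_le (hp : 0 ≤ p) (hpc : p ≤ c)
    (hs : Tendsto s atTop atTop) {M : ℝ} (hM : ∀ᶠ k in atTop, Z (s (k + 1)) ≤ M) :
    ∀ᶠ t in atTop, Z t ≤ M := by
  obtain ⟨K, hK⟩ := hM.exists_forall_of_atTop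
  filter_upwards [eventually_ge_atTop (s (K + 1))] with t ht
  obtain ⟨k, hk, htk⟩ := exists_mem_Ico_of_tendsto (strictMono_entry hse).monotone hs ht
  refine (hZ.le_max_entry hse hcov hp hpc (Ico_subset_Icc_self htk)).trans
    (max_le ?_ (hK k (by omega)))
  simpa using hK (k - 1) (by omega)

end IsAccumulation

end Coverage

theorem steady_state_upper_bound_general (F : Set ℝ) (p c : ℝ)
    (hp : 0 < p) (hpc : p < c) (T : ℝ) (hT : 0 < T) (ℓ : ℕ) (hℓ : 1 ≤ ℓ)
    (s e : ℤ → ℝ)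
    (hse : ∀ k : ℤ, s k < e k ∧ e k < s (k + 1))
    (hsper : ∀ k : ℤ, s (k + (ℓ : ℤ)) = s k + T)
    (heper : ∀ k : ℤ, e (k + (ℓ : ℤ)) = e k + T)
    (θ : ℝ → ℝ)
    (hcov : {t : ℝ | θ t ∈ F} = ⋃ k : ℤ, Set.Icc (s k) (e k))
    (hstab : p * T < c * ∑ k ∈ Finset.Icc (1 : ℤ) (ℓ : ℤ), (e k - s k)) :
    ∀ Z : ℝ → ℝ, IsAccumulation F p c θ Z →
      IsGreatest
        {x : ℝ | ∃ k ∈ Finset.Icc (1 : ℤ) (ℓ : ℤ), ∃ b ∈ Finset.range ℓ,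
          x = p * (s (k + 1) - e (k - (b : ℤ))) -
            c * ∑ w ∈ Finset.range b, (e (k - (w : ℤ)) - s (k - (w : ℤ)))}
        (Filter.limsup Z Filter.atTop) := by
  intro Z hZ
  have hne : (Finset.Icc (1 : ℤ) ℓ ×ˢ Finset.range ℓ).Nonempty :=
    ⟨(1, 0), by simp only [Finset.mem_product, Finset.mem_Icc, Finset.mem_range]; omega⟩
  obtain ⟨⟨k₀, b₀⟩, hkb₀, hmax⟩ := (Finset.Icc (1 : ℤ) ℓ ×ˢ Finset.range ℓ).exists_max_image
    (fun q => steadyPeak p c s e q.1 q.2) hne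
  obtain ⟨hk₀, hb₀⟩ := Finset.mem_product.1 hkb₀
  have hle_max : ∀ k, ∀ b < ℓ, steadyPeak p c s e k b ≤ steadyPeak p c s e k₀ b₀ := by
    intro k b hb
    obtain ⟨k', hk', hkk'⟩ := (periodic_steadyPeak hsper heper b).exists_mem_Ioc (by omega) k 0
    refine hkk' ▸ hmax (k', b) ?_
    simp only [Finset.mem_product, Finset.mem_Icc, Finset.mem_range, mem_Ioc] at hk' ⊢
    omega
  have hs : Tendsto s atTop atTop :=
    tendsto_atTop_of_add_eq (strictMono_entry hse).monotone hT hsper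
  have hlimsup : limsup Z atTop = steadyPeak p c s e k₀ b₀ := by
    refine limsup_eq_of_eventually_le_of_frequently_le ?_ ?_
    · have hentry := hZ.eventually_entry_eq_steadyPeak hse hcov hp.le hpc.le (by omega)
        hsper heper hstab
      refine hZ.eventually_le_of_eventually_entry_le hse hcov hp.le hpc.le hs ?_
      filter_upwards [hentry] with k ⟨b, hb, hk⟩
      exact hk ▸ hle_max k b hb
    · refine (hs.comp (tendsto_atTop_add_const_right _ 1 tendsto_id)).frequently ?_
      exact ((periodic_steadyPeak hsper heper b₀).frequently_atTop_eq (by omega) k₀).mono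
        fun k hk => hk ▸ hZ.steadyPeak_le_entry hse hcov hp.le hpc.le k b₀
  rw [hlimsup]
  refine ⟨⟨k₀, hk₀, b₀, hb₀, rfl⟩, ?_⟩
  rintro x ⟨k, -, b, hb, rfl⟩
  exact hle_max k b (Finset.mem_range.1 hb)

/-- Steady-state upper bound lemma: with entry times `s_k` and exit times `e_k` of the
covered set in each period, under the stability condition the limsup of every
accumulation function equals the maximum of the quantities
`X_{k,b} = p·(s_{k+1} − e_{k−b}) − c·Σ_{w=0}^{b−1} (e_{k−w} − s_{k−w})`
over `k ∈ {1,…,ℓ}` and `b ∈ {0,…,ℓ−1}`. -/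
theorem steady_state_upper_bound (F : Set ℝ) (hF : MeasurableSet F) (p c : ℝ)
    (hp : 0 < p) (hpc : p < c) (T : ℝ) (hT : 0 < T) (ℓ : ℕ) (hℓ : 1 ≤ ℓ)
    (s e : ℤ → ℝ)
    (hse : ∀ k : ℤ, s k < e k ∧ e k < s (k + 1))
    (hsper : ∀ k : ℤ, s (k + (ℓ : ℤ)) = s k + T)
    (heper : ∀ k : ℤ, e (k + (ℓ : ℤ)) = e k + T)
    (θ : ℝ → ℝ)
    (htraj : IsTrajectory F θ T (∑ k ∈ Finset.Icc (1 : ℤ) (ℓ : ℤ), (e k - s k)))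
    (hcov : {t : ℝ | θ t ∈ F} = ⋃ k : ℤ, Set.Icc (s k) (e k))
    (hstab : p * T < c * ∑ k ∈ Finset.Icc (1 : ℤ) (ℓ : ℤ), (e k - s k)) :
    ∀ Z : ℝ → ℝ, IsAccumulation F p c θ Z →
      IsGreatest
        {x : ℝ | ∃ k ∈ Finset.Icc (1 : ℤ) (ℓ : ℤ), ∃ b ∈ Finset.range ℓ,
          x = p * (s (k + 1) - e (k - (b : ℤ))) -
            c * ∑ w ∈ Finset.range b, (e (k - (w : ℤ)) - s (k - (w : ℤ)))}
        (Filter.limsup Z Filter.atTop) :=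
  steady_state_upper_bound_general F p c hp hpc T hT ℓ hℓ s e hse hsper heper θ hcov hstab
end

section
/- (Existence of a Field Stabilizing Controller via a Linear Program.) Let n ≥ 1 and for j ∈ {1,…,n} let β_j : [0,1] → ℝ be the rectangular basis function equal to 1 on [(j−1)/n, j/n) and 0 elsewhere. Let v_min, v_max : [0,1] → ℝ with 0 < v_min(θ) ≤ v_max(θ) for all θ, and set v_max(j) := inf_{θ ∈ [(j−1)/n, j/n)} v_max(θ) and v_min(j) := sup_{θ ∈ [(j−1)/n, j/n)} v_min(θ), assuming v_min(j) and v_max(j) are positive and finite. Let q_1,…,q_m be points of interest with measurable covered-position sets F(q_i) ⊆ [0,1] and rates 0 < p(q_i) < c(q_i), and define K(q_i,β_j) := ∫_{F(q_i)} β_j(θ) dθ − (p(q_i)/c(q_i))·∫_0^1 β_j(θ) dθ. Then the following are equivalent: (a) there exist α_1,…,α_n ∈ ℝ with 1/v_max(j) ≤ α_j ≤ 1/v_min(j) for all j and Σ_{j=1}^n α_j·K(q_i,β_j) > 0 for all i ∈ {1,…,m}; (b) there exists a speed controller v : [0,1] → ℝ of the form 1/v(θ) = Σ_{j=1}^n α_j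 β_j(θ) for some α ∈ ℝ^n such that v(θ) > 0 and v_min(θ) ≤ v(θ) ≤ v_max(θ) for all θ ∈ [0,1], and the stability condition c(q_i)·∫_{F(q_i)} 1/v(θ) dθ > p(q_i)·∫_0^1 1/v(θ) dθ holds for every i ∈ {1,…,m}. -/
open MeasureTheory Filter Set

/-! On the `j`-th cell a controller with `1/v = Σ α_j β_j` runs at the constant speed `1/α_j`,
so the speed limits on that cell say exactly that `1/v_max(j) ≤ α_j ≤ 1/v_min(j)`. Integrals of
`1/v` are linear in `α`, and after dividing by `c(q_i) > 0` the stability condition at `q_i`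
becomes `Σ_j α_j K(q_i, β_j) > 0`. -/

noncomputable def rectBasis (n : ℕ) (j : Fin n) : ℝ → ℝ :=
  Set.indicator (Set.Ico ((j : ℝ) / n) (((j : ℝ) + 1) / n)) (fun _ => (1 : ℝ))

noncomputable def cellInf (n : ℕ) (v : ℝ → ℝ) (j : Fin n) : ℝ :=
  sInf (v '' Set.Ico ((j : ℝ) / n) (((j : ℝ) + 1) / n))

noncomputable def cellSup (n : ℕ) (v : ℝ → ℝ) (j : Fin n) : ℝ :=
  sSup (v '' Set.Ico ((j : ℝ) / n) (((j : ℝ) + 1) / n))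

def cell (n : ℕ) (j : Fin n) : Set ℝ :=
  Ico ((j : ℝ) / n) (((j : ℝ) + 1) / n)

section Cells

variable {n : ℕ}

lemma cell_subset_Ico (j : Fin n) : cell n j ⊆ Ico 0 1 := by
  have hn : (0 : ℝ) < n := by exact_mod_cast j.pos
  have hj : ((j : ℝ) + 1) / n ≤ 1 := by
    rw [div_le_one hn]
    exact_mod_cast j.2
  exact Ico_subset_Ico (by positivity) hj

lemma cell_nonempty (j : Fin n) : (cell n j).Nonempty := by
  have hn : (0 : ℝ) < n := by exact_mod_cast j.pos
  exact nonempty_Ico.2 (div_lt_div_of_pos_right (lt_add_one _) hn)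

lemma exists_mem_cell (hn : 0 < n) {x : ℝ} (hx : x ∈ Ico (0 : ℝ) 1) : ∃ j : Fin n, x ∈ cell n j := by
  have hn' : (0 : ℝ) < n := by exact_mod_cast hn
  have hxn : 0 ≤ x * n := mul_nonneg hx.1 hn'.le
  have hlt : ⌊x * n⌋₊ < n := by
    rw [Nat.floor_lt hxn]
    nlinarith [hx.2]
  refine ⟨⟨⌊x * n⌋₊, hlt⟩, ?_, ?_⟩
  · rw [div_le_iff₀ hn']
    exact Nat.floor_le hxn
  · rw [lt_div_iff₀ hn']
    exact Nat.lt_floor_add_one (x * n)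

lemma eq_of_mem_cell {x : ℝ} {j k : Fin n} (hj : x ∈ cell n j) (hk : x ∈ cell n k) : j = k := by
  have hn : (0 : ℝ) < n := by exact_mod_cast j.pos
  have hjk : (j : ℝ) < k + 1 := by
    simpa [div_lt_div_iff_of_pos_right hn] using hj.1.trans_lt hk.2
  have hkj : (k : ℝ) < j + 1 := by
    simpa [div_lt_div_iff_of_pos_right hn] using hk.1.trans_lt hj.2
  norm_cast at hjk hkj
  omega

lemma rectBasis_eq_indicator (j : Fin n) : rectBasis n j = (cell n j).indicator 1 := rfl

lemma sum_mul_rectBasis_of_mem_cell (α : Fin n → ℝ) {x : ℝ} {j : Fin n} (hx : x ∈ cell n j) :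
    ∑ k, α k * rectBasis n k x = α j := by
  rw [Finset.sum_eq_single_of_mem j (Finset.mem_univ j)]
  · rw [rectBasis_eq_indicator, indicator_of_mem hx, Pi.one_apply, mul_one]
  · intro k _ hkj
    rw [rectBasis_eq_indicator, indicator_of_notMem (fun hk => hkj (eq_of_mem_cell hk hx)),
      mul_zero]

end Cells

section Integrals

variable {n : ℕ} {g : ℝ → ℝ} {α : Fin n → ℝ}

lemma integrable_rectBasis (j : Fin n) : Integrable (rectBasis n j) := by
  rw [rectBasis, integrable_indicator_iff measurableSet_Ico]
  exact integrableOn_const measure_Ico_lt_top.ne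

lemma setIntegral_eq_sum_mul_setIntegral_rectBasis {S : Set ℝ} (hS : MeasurableSet S)
    (hg : EqOn g (fun x => ∑ j, α j * rectBasis n j x) S) :
    ∫ x in S, g x = ∑ j, α j * ∫ x in S, rectBasis n j x := by
  rw [setIntegral_congr_fun hS hg,
    integral_finsetSum _ fun j _ => ((integrable_rectBasis j).const_mul _).integrableOn]
  simp only [integral_const_mul]

lemma intervalIntegral_eq_sum_mul_intervalIntegral_rectBasis
    (hg : EqOn g (fun x => ∑ j, α j * rectBasis n j x) (Ico 0 1)) :
    ∫ x in (0 : ℝ)..1, g x = ∑ j, α j * ∫ x in (0 : ℝ)..1, rectBasis n j x := by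
  simp only [intervalIntegral.integral_of_le zero_le_one,
    ← Measure.restrict_congr_set Ico_ae_eq_Ioc]
  exact setIntegral_eq_sum_mul_setIntegral_rectBasis measurableSet_Ico hg

lemma stability_iff_sum_mul_pos (hg : EqOn g (fun x => ∑ j, α j * rectBasis n j x) (Ico 0 1))
    {F : Set ℝ} (hF : MeasurableSet F) (hFsub : F ⊆ Ico 0 1) {p c : ℝ} (hc : 0 < c) :
    p * ∫ x in (0 : ℝ)..1, g x < c * ∫ x in F, g x ↔
      0 < ∑ j, α j * ((∫ x in F, rectBasis n j x) - p / c * ∫ x in (0 : ℝ)..1, rectBasis n j x) := by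
  simp only [mul_sub, Finset.sum_sub_distrib, mul_left_comm _ (p / c), ← Finset.mul_sum]
  rw [intervalIntegral_eq_sum_mul_intervalIntegral_rectBasis hg,
    setIntegral_eq_sum_mul_setIntegral_rectBasis hF (hg.mono hFsub),
    sub_pos, div_mul_eq_mul_div, div_lt_iff₀ hc, mul_comm c]

end Integrals

lemma inv_sInf_le_and_le_inv_sSup_iff {s : Set ℝ} {vmin vmax : ℝ → ℝ} {a : ℝ} (hs : s.Nonempty)
    (hmin : BddAbove (vmin '' s)) (hmax : BddBelow (vmax '' s))
    (hminpos : 0 < sSup (vmin '' s)) (hmaxpos : 0 < sInf (vmax '' s)) :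
    (sInf (vmax '' s))⁻¹ ≤ a ∧ a ≤ (sSup (vmin '' s))⁻¹ ↔
      ∀ x ∈ s, 0 < a⁻¹ ∧ vmin x ≤ a⁻¹ ∧ a⁻¹ ≤ vmax x := by
  constructor
  · rintro ⟨hlo, hhi⟩ x hx
    have ha : 0 < a := (inv_pos.2 hmaxpos).trans_le hlo
    rw [inv_le_comm₀ hmaxpos ha] at hlo
    rw [le_inv_comm₀ ha hminpos] at hhi
    exact ⟨inv_pos.2 ha, (le_csSup hmin (mem_image_of_mem _ hx)).trans hhi,
      hlo.trans (csInf_le hmax (mem_image_of_mem _ hx))⟩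
  · intro h
    have ha : 0 < a := inv_pos.1 (h hs.some hs.some_mem).1
    rw [inv_le_comm₀ hmaxpos ha, le_inv_comm₀ ha hminpos,
      le_csInf_iff hmax (hs.image _), csSup_le_iff hmin (hs.image _), forall_mem_image,
      forall_mem_image]
    exact ⟨fun x hx => (h x hx).2.2, fun x hx => (h x hx).2.1⟩

/-- Existence of a field stabilizing controller via a linear program:
the LP constraints `1/v_max(j) ≤ α_j ≤ 1/v_min(j)`, `Σ_j α_j K(q_i,β_j) > 0` are feasible
if and only if there is a speed controller of the form `1/v = Σ_j α_j β_j` respecting the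
speed limits and satisfying the stability condition at every point of interest. -/
theorem field_stabilizing_LP (n : ℕ) (hn : 1 ≤ n) (vmin vmax : ℝ → ℝ)
    (hv : ∀ x ∈ Set.Ico (0 : ℝ) 1, 0 < vmin x ∧ vmin x ≤ vmax x)
    (hbdd : ∀ j : Fin n, BddAbove (vmin '' Set.Ico ((j : ℝ) / n) (((j : ℝ) + 1) / n)))
    (hmaxpos : ∀ j : Fin n, 0 < cellInf n vmax j)
    (hminpos : ∀ j : Fin n, 0 < cellSup n vmin j)
    (m : ℕ) (F : Fin m → Set ℝ) (hFmeas : ∀ i, MeasurableSet (F i))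
    (hFsub : ∀ i, F i ⊆ Set.Ico (0 : ℝ) 1)
    (p c : Fin m → ℝ) (hpc : ∀ i, 0 < p i ∧ p i < c i) :
    (∃ α : Fin n → ℝ,
      (∀ j, (cellInf n vmax j)⁻¹ ≤ α j ∧ α j ≤ (cellSup n vmin j)⁻¹) ∧
      (∀ i, 0 < ∑ j, α j *
        ((∫ x in F i, rectBasis n j x) -
          (p i / c i) * ∫ x in (0:ℝ)..1, rectBasis n j x))) ↔
    (∃ v : ℝ → ℝ, ∃ α : Fin n → ℝ,
      (∀ x ∈ Set.Ico (0 : ℝ) 1, (v x)⁻¹ = ∑ j, α j * rectBasis n j x) ∧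
      (∀ x ∈ Set.Ico (0 : ℝ) 1, 0 < v x ∧ vmin x ≤ v x ∧ v x ≤ vmax x) ∧
      (∀ i, p i * ∫ x in (0:ℝ)..1, (v x)⁻¹ < c i * ∫ x in F i, (v x)⁻¹)) := by
  have hc : ∀ i, 0 < c i := fun i => (hpc i).1.trans (hpc i).2
  have hvmax : ∀ j, BddBelow (vmax '' cell n j) := fun j =>
    ⟨0, forall_mem_image.2 fun x hx =>
      have hx := hv x (cell_subset_Ico j hx)
      hx.1.le.trans hx.2⟩
  have hcell : ∀ j a, (cellInf n vmax j)⁻¹ ≤ a ∧ a ≤ (cellSup n vmin j)⁻¹ ↔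
      ∀ x ∈ cell n j, 0 < a⁻¹ ∧ vmin x ≤ a⁻¹ ∧ a⁻¹ ≤ vmax x := fun j _ =>
    inv_sInf_le_and_le_inv_sSup_iff (cell_nonempty j) (hbdd j) (hvmax j) (hminpos j) (hmaxpos j)
  constructor
  · rintro ⟨α, hα, hK⟩
    have hrep : EqOn (fun x => ((∑ j, α j * rectBasis n j x)⁻¹)⁻¹)
        (fun x => ∑ j, α j * rectBasis n j x) (Ico 0 1) := fun x _ => inv_inv _
    refine ⟨_, α, hrep, fun x hx => ?_, fun i =>
      (stability_iff_sum_mul_pos hrep (hFmeas i) (hFsub i) (hc i)).2 (hK i)⟩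
    obtain ⟨j, hj⟩ := exists_mem_cell hn hx
    rw [sum_mul_rectBasis_of_mem_cell α hj]
    exact (hcell j _).1 (hα j) x hj
  · rintro ⟨v, α, hrep, hspeed, hstab⟩
    refine ⟨α, fun j => (hcell j _).2 fun x hx => ?_, fun i =>
      (stability_iff_sum_mul_pos hrep (hFmeas i) (hFsub i) (hc i)).1 (hstab i)⟩
    have hvx : (v x)⁻¹ = α j :=
      (hrep x (cell_subset_Ico j hx)).trans (sum_mul_rectBasis_of_mem_cell α hx)
    rw [← hvx, inv_inv]
    exact hspeed x (cell_subset_Ico j hx)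
end
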